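/- arXiv:1705.02856 — 10 statements merged into one kernel-verified Lean document; each statement's English description precedes it below -/
import Mathlib

section
/- For every z ∈ K with 1 + β·z ≠ 0 and z ≠ x_i for all i, one has (1/(1+βz)) · ∏_{i=1}^n (z ⊖ w_i)/(z ⊖ x_i) = 1/(1+βz) + Σ_{i=1}^n [(x_i ⊖ w_i)/(z − x_i)] · ∏_{j≠i} (x_i ⊖ w_j)/(x_i ⊖ x_j). -/
/-!
Write `c = ∏ (1 + β xᵢ) / (1 + β wᵢ)`; then `∏ (z ⊖ wᵢ) / (z ⊖ xᵢ) = c ∏ (z - wᵢ) / ∏ (z - xᵢ)`,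
a quotient of two monic polynomials of degree `n`. Lagrange interpolation at the nodes `xᵢ` gives
its partial fraction expansion, with constant term `c`. At the pole `z = -1/β` of `1/(1 + βz)` one
has `(1 + β xᵢ)(z - wᵢ) = (1 + β wᵢ)(z - xᵢ)`, so this quotient equals `1` there and the expansion
turns into `c = 1 + β ∑ₖ Rₖ`, where `Rₖ` are the residues of `c ∏ (z - wᵢ) / ((1 + βz) ∏ (z - xᵢ))`
at the `xₖ`. Substituting this value of `c` back into the expansion gives the identity.
-/

open Polynomial Finset Lagrange

section

variable {K ι : Type*} [Field K]

namespace Lagrange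

variable [DecidableEq ι] {s : Finset ι} {v : ι → K}

theorem eval_eq_eval_nodal_mul_coeff_add_sum (hvs : Set.InjOn v s) {f : K[X]}
    (hf : f.natDegree ≤ #s) {z : K} (hz : ∀ i ∈ s, z ≠ v i) :
    f.eval z = (nodal s v).eval z *
      (f.coeff #s + ∑ i ∈ s, nodalWeight s v i * (z - v i)⁻¹ * f.eval (v i)) := by
  set g := f - C (f.coeff #s) * nodal s v
  have hg : g.degree < #s := by
    refine (degree_lt_iff_coeff_zero g #s).2 fun m hm => ?_
    rcases hm.eq_or_lt with rfl | hm
    · have h1 : (nodal s v).coeff #s = 1 := by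
        simpa [natDegree_nodal] using (nodal_monic (s := s) (v := v)).coeff_natDegree
      simp [g, h1]
    · simp [g, coeff_eq_zero_of_natDegree_lt (hf.trans_lt hm),
        coeff_eq_zero_of_natDegree_lt (natDegree_nodal (s := s) (v := v) ▸ hm)]
  have hgv : ∀ i ∈ s, g.eval (v i) = f.eval (v i) := fun i hi => by
    simp [g, eval_nodal_at_node hi]
  have hgz := congrArg (eval z) (eq_interpolate_of_eval_eq _ hvs hg hgv)
  rw [eval_interpolate_not_at_node _ hz] at hgz
  simp only [g, eval_sub, eval_mul, eval_C] at hgz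
  linear_combination hgz

theorem eval_nodal_eq_eval_nodal_mul_one_add_sum (hvs : Set.InjOn v s) (w : ι → K) {z : K}
    (hz : ∀ i ∈ s, z ≠ v i) :
    (nodal s w).eval z = (nodal s v).eval z *
      (1 + ∑ k ∈ s, nodalWeight s v k * (z - v k)⁻¹ * (nodal s w).eval (v k)) := by
  have h1 : (nodal s w).coeff #s = 1 := by
    simpa [natDegree_nodal] using (nodal_monic (s := s) (v := w)).coeff_natDegree
  rw [← h1]
  exact eval_eq_eval_nodal_mul_coeff_add_sum hvs natDegree_nodal.le hz

end Lagrange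

namespace ConnectiveKTheory

variable {β : K} {s : Finset ι} {x w : ι → K}

theorem prod_div_div_div_eq (z : K) :
    ∏ i ∈ s, ((z - w i) / (1 + β * w i)) / ((z - x i) / (1 + β * x i))
      = (∏ i ∈ s, (1 + β * x i) / (1 + β * w i)) * ((nodal s w).eval z / (nodal s x).eval z) := by
  rw [eval_nodal, eval_nodal, ← prod_div_distrib, ← prod_mul_distrib]
  refine prod_congr rfl fun i _ => ?_
  rw [div_div_div_eq, div_mul_div_comm]
  ring

variable (β s x w) [DecidableEq ι]

/-- The residue at `z = x k` of `c ∏ (z - w i) / ((1 + β z) ∏ (z - x i))`,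
where `c = ∏ (1 + β x i) / (1 + β w i)`. -/
noncomputable def residue (k : ι) : K :=
  (∏ i ∈ s, (1 + β * x i) / (1 + β * w i)) * nodalWeight s x k * (nodal s w).eval (x k) /
    (1 + β * x k)

variable {β s x w}

theorem prod_div_one_add_mul_eq_add_sum_residue (hxs : Set.InjOn x s)
    (hxu : ∀ i ∈ s, 1 + β * x i ≠ 0) (hwu : ∀ i ∈ s, 1 + β * w i ≠ 0) :
    ∏ i ∈ s, (1 + β * x i) / (1 + β * w i) = 1 + β * ∑ k ∈ s, residue β s x w k := by
  set c := ∏ i ∈ s, (1 + β * x i) / (1 + β * w i)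
  rcases eq_or_ne β 0 with rfl | hβ
  · simp [c]
  set y := -β⁻¹
  have hy : 1 + β * y = 0 := by simp [y, hβ]
  have hyx : ∀ i ∈ s, y ≠ x i := fun i hi h => hxu i hi (h ▸ hy)
  have hNy : (nodal s x).eval y ≠ 0 := eval_nodal_not_at_node hyx
  have hcW : c * (nodal s w).eval y = (nodal s x).eval y := by
    rw [eval_nodal, eval_nodal, ← prod_mul_distrib]
    refine prod_congr rfl fun i hi => ?_
    rw [div_mul_eq_mul_div, div_eq_iff (hwu i hi)]
    linear_combination (x i - w i) * hy
  have hres : ∀ k ∈ s, c * (nodalWeight s x k * (y - x k)⁻¹ * (nodal s w).eval (x k))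
      = -β * residue β s x w k := fun k hk => by
    have : y - x k = -(1 + β * x k) / β := by
      rw [eq_div_iff hβ]
      linear_combination hy
    rw [residue, this]
    field_simp
    ring
  have key : (nodal s x).eval y * (c - β * ∑ k ∈ s, residue β s x w k) = (nodal s x).eval y :=
    calc _ = (nodal s x).eval y *
          (c + ∑ k ∈ s, c * (nodalWeight s x k * (y - x k)⁻¹ * (nodal s w).eval (x k))) := by
          rw [sum_congr rfl hres, ← mul_sum]; ring
      _ = c * (nodal s w).eval y := by
          rw [eval_nodal_eq_eval_nodal_mul_one_add_sum hxs w hyx, ← mul_sum, mul_left_comm,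
            mul_one_add]
      _ = _ := hcW
  linear_combination (mul_eq_left₀ hNy).mp key

theorem prod_div_mul_eval_nodal_div_eq (hxs : Set.InjOn x s)
    (hxu : ∀ i ∈ s, 1 + β * x i ≠ 0) (hwu : ∀ i ∈ s, 1 + β * w i ≠ 0) {z : K}
    (hz : ∀ i ∈ s, z ≠ x i) :
    (∏ i ∈ s, (1 + β * x i) / (1 + β * w i)) * ((nodal s w).eval z / (nodal s x).eval z)
      = 1 + (1 + β * z) * ∑ k ∈ s, residue β s x w k / (z - x k) := by
  set c := ∏ i ∈ s, (1 + β * x i) / (1 + β * w i)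
  have hNz : (nodal s x).eval z ≠ 0 := eval_nodal_not_at_node hz
  have hterm : ∀ k ∈ s, (1 + β * z) * (residue β s x w k / (z - x k))
      = β * residue β s x w k + c * (nodalWeight s x k * (z - x k)⁻¹ * (nodal s w).eval (x k)) :=
    fun k hk => by
      have := hxu k hk
      have := sub_ne_zero.mpr (hz k hk)
      rw [residue]
      field_simp
      ring
  rw [mul_sum, sum_congr rfl hterm, sum_add_distrib, ← mul_sum, ← mul_sum, ← add_assoc,
    ← prod_div_one_add_mul_eq_add_sum_residue hxs hxu hwu,
    eval_nodal_eq_eval_nodal_mul_one_add_sum hxs w hz, mul_div_cancel_left₀ _ hNz]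
  ring

theorem div_one_add_mul_mul_prod_div_eq (hxu : ∀ i ∈ s, 1 + β * x i ≠ 0) {k : ι} (hk : k ∈ s) :
    (x k - w k) / (1 + β * w k) *
        ∏ j ∈ s.erase k, ((x k - w j) / (1 + β * w j)) / ((x k - x j) / (1 + β * x j))
      = residue β s x w k := by
  have hdiv : ∀ j ∈ s.erase k, ((x k - w j) / (1 + β * w j)) / ((x k - x j) / (1 + β * x j))
      = (x k - w j) / (1 + β * w j) * ((1 + β * x j) * (x k - x j)⁻¹) :=
    fun j _ => by rw [div_div_div_eq, div_eq_mul_inv, mul_inv]; ring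
  rw [prod_congr rfl hdiv, prod_mul_distrib, ← mul_assoc,
    mul_prod_erase s (fun j => (x k - w j) / (1 + β * w j)) hk, prod_mul_distrib,
    residue, nodalWeight, eval_nodal, prod_div_distrib, prod_div_distrib,
    ← mul_prod_erase s (fun i => 1 + β * x i) hk, eq_div_iff (hxu k hk)]
  ring

end ConnectiveKTheory

end

open ConnectiveKTheory in
theorem stmt1_general {K : Type*} [Field K] (β : K) (n : ℕ)
    (x w : Fin n → K)
    (hx : Function.Injective x)
    (hxu : ∀ i, 1 + β * x i ≠ 0)
    (hwu : ∀ i, 1 + β * w i ≠ 0)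
    (ominus : K → K → K)
    (hominus : ∀ a b, ominus a b = (a - b) / (1 + β * b))
    (z : K) (hz : 1 + β * z ≠ 0) (hzx : ∀ i, z ≠ x i) :
    (1 / (1 + β * z)) * ∏ i, ominus z (w i) / ominus z (x i)
      = 1 / (1 + β * z)
        + ∑ i, (ominus (x i) (w i) / (z - x i))
            * ∏ j ∈ Finset.univ.erase i, ominus (x i) (w j) / ominus (x i) (x j) := by
  have hxu' : ∀ i ∈ univ, 1 + β * x i ≠ 0 := fun i _ => hxu i
  have hterm : ∀ i ∈ univ, (x i - w i) / (1 + β * w i) / (z - x i) *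
      ∏ j ∈ univ.erase i, (x i - w j) / (1 + β * w j) / ((x i - x j) / (1 + β * x j))
        = residue β univ x w i / (z - x i) := fun i hi => by
    rw [div_mul_eq_mul_div, div_one_add_mul_mul_prod_div_eq hxu' hi]
  simp only [hominus]
  rw [prod_div_div_div_eq, sum_congr rfl hterm, prod_div_mul_eval_nodal_div_eq hx.injOn hxu'
    (fun i _ => hwu i) (fun i _ => hzx i)]
  field_simp

/-- connective K-theory case of `N_F(z) = 1/(1+βz)`.
With `a ⊖ b := (a - b)/(1 + β b)`, for every `z` with `1 + βz ≠ 0` and `z ≠ xᵢ`: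
`(1/(1+βz)) ∏ᵢ (z ⊖ wᵢ)/(z ⊖ xᵢ) = 1/(1+βz) + Σᵢ (xᵢ ⊖ wᵢ)/(z - xᵢ) ∏_{j≠i} (xᵢ ⊖ wⱼ)/(xᵢ ⊖ xⱼ)`. -/
theorem stmt1 {K : Type*} [Field K] (β : K) (n : ℕ) (hn : 1 ≤ n)
    (x w : Fin n → K)
    (hx : Function.Injective x)
    (hxu : ∀ i, 1 + β * x i ≠ 0)
    (hwu : ∀ i, 1 + β * w i ≠ 0)
    (ominus : K → K → K)
    (hominus : ∀ a b, ominus a b = (a - b) / (1 + β * b))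
    (z : K) (hz : 1 + β * z ≠ 0) (hzx : ∀ i, z ≠ x i) :
    (1 / (1 + β * z)) * ∏ i, ominus z (w i) / ominus z (x i)
      = 1 / (1 + β * z)
        + ∑ i, (ominus (x i) (w i) / (z - x i))
            * ∏ j ∈ Finset.univ.erase i, ominus (x i) (w j) / ominus (x i) (x j) :=
  stmt1_general β n x w hx hxu hwu ominus hominus z hz hzx
end

section
/- One has ∏_{i=1}^n (1+β·x_i) / ∏_{i=1}^n (1+β·w_i) = 1 + β · Σ_{i=1}^n [∏_{j=1}^n (x_i ⊖ w_j)] / [∏_{j≠i} (x_i ⊖ x_j)]. -/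
/-!
The monic polynomials `∏ⱼ (X - wⱼ)` and `∏ⱼ (X - xⱼ)` have the same degree, so their difference
has degree `< n` and equals its Lagrange interpolant on the nodes `xᵢ`. Evaluating at
`X = -β⁻¹`, where `X - a = -β⁻¹ (1 + β a)`, gives the partial fraction expansion
`∏(1 + βw) / ∏(1 + βx) = 1 - β Σᵢ ∏ⱼ (xᵢ - wⱼ) / ((1 + βxᵢ) ∏_{j ≠ i} (xᵢ - xⱼ))`,
and multiplying by `∏(1 + βx) / ∏(1 + βw)` turns each summand into the `⊖`-quotient.
-/

open Finset Polynomial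

namespace Lagrange

variable {F ι : Type*} [Field F] {s : Finset ι} {v : ι → F}

theorem eval_nodal_sub_nodal_not_at_node [DecidableEq ι] (hvs : Set.InjOn v s) (w : ι → F) {y : F}
    (hy : ∀ i ∈ s, y ≠ v i) :
    (nodal s w).eval y - (nodal s v).eval y =
      (nodal s v).eval y * ∑ i ∈ s, nodalWeight s v i * (y - v i)⁻¹ * (nodal s w).eval (v i) := by
  have hdeg : (nodal s w - nodal s v).degree < #s := by
    have h := degree_sub_lt_left (p := nodal s w) (q := nodal s v) (by rw [degree_nodal, degree_nodal])
      nodal_ne_zero (by rw [nodal_monic.leadingCoeff, nodal_monic.leadingCoeff])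
    rwa [degree_nodal] at h
  have h := congrArg (eval y) (eq_interpolate hvs hdeg)
  rw [eval_sub, eval_interpolate_not_at_node _ hy] at h
  rw [h]
  congr 1
  refine sum_congr rfl fun i hi => ?_
  rw [eval_sub, eval_nodal_at_node hi, sub_zero]

theorem eval_nodal_neg_inv {β : F} (hβ : β ≠ 0) :
    (nodal s v).eval (-β⁻¹) = (-β⁻¹) ^ #s * ∏ i ∈ s, (1 + β * v i) := by
  rw [eval_nodal, ← prod_const, ← prod_mul_distrib]
  refine prod_congr rfl fun i _ => ?_
  field_simp
  ring

end Lagrange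

open Lagrange

section

variable {K ι : Type*} [Field K] [DecidableEq ι]

theorem prod_one_add_mul_div_prod_one_add_mul {s : Finset ι} {x : ι → K} (hx : Set.InjOn x s)
    (w : ι → K) {β : K} (hxu : ∀ i ∈ s, 1 + β * x i ≠ 0) :
    (∏ i ∈ s, (1 + β * w i)) / ∏ i ∈ s, (1 + β * x i) =
      1 - β * ∑ i ∈ s, nodalWeight s x i * (1 + β * x i)⁻¹ * ∏ j ∈ s, (x i - w j) := by
  rcases eq_or_ne β 0 with rfl | hβ
  · simp
  have hy : ∀ i ∈ s, -β⁻¹ ≠ x i := fun i hi h =>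
    hxu i hi (by rw [← h, mul_neg, mul_inv_cancel₀ hβ, add_neg_cancel])
  have h := eval_nodal_sub_nodal_not_at_node hx w hy
  rw [eval_nodal_neg_inv hβ, eval_nodal_neg_inv hβ] at h
  have hsum : ∑ i ∈ s, nodalWeight s x i * (-β⁻¹ - x i)⁻¹ * (nodal s w).eval (x i) =
      -β * ∑ i ∈ s, nodalWeight s x i * (1 + β * x i)⁻¹ * ∏ j ∈ s, (x i - w j) := by
    rw [mul_sum]
    refine sum_congr rfl fun i _ => ?_
    rw [eval_nodal, show -β⁻¹ - x i = -β⁻¹ * (1 + β * x i) by field_simp; ring, mul_inv, inv_neg,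
      inv_inv]
    ring
  rw [hsum] at h
  have hc : (-β⁻¹ : K) ^ #s ≠ 0 := by simp [hβ]
  rw [div_eq_iff (prod_ne_zero_iff.2 hxu)]
  apply mul_left_cancel₀ hc
  linear_combination h

theorem prod_sub_div_one_add_mul_div_prod_erase {s : Finset ι} {x w : ι → K} {β : K} {i : ι}
    (hi : i ∈ s) (hxi : 1 + β * x i ≠ 0) :
    (∏ j ∈ s, (x i - w j) / (1 + β * w j)) / ∏ j ∈ s.erase i, (x i - x j) / (1 + β * x j) =
      (∏ j ∈ s, (1 + β * x j)) / (∏ j ∈ s, (1 + β * w j)) *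
        (nodalWeight s x i * (1 + β * x i)⁻¹ * ∏ j ∈ s, (x i - w j)) := by
  rw [prod_div_distrib, prod_div_distrib, nodalWeight, prod_inv_distrib,
    ← mul_prod_erase s (fun j => 1 + β * x j) hi]
  field_simp
  exact (mul_div_mul_right _ _ (by rwa [mul_comm])).symm

end

theorem stmt2_general {K : Type*} [Field K] (β : K) (n : ℕ)
    (x w : Fin n → K)
    (hx : Function.Injective x)
    (hxu : ∀ i, 1 + β * x i ≠ 0)
    (hwu : ∀ i, 1 + β * w i ≠ 0)
    (ominus : K → K → K)
    (hominus : ∀ a b, ominus a b = (a - b) / (1 + β * b)) :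
    (∏ i, (1 + β * x i)) / (∏ i, (1 + β * w i))
      = 1 + β * ∑ i, (∏ j, ominus (x i) (w j))
            / (∏ j ∈ Finset.univ.erase i, ominus (x i) (x j)) := by
  simp only [hominus]
  rw [sum_congr rfl fun i _ => prod_sub_div_one_add_mul_div_prod_erase (mem_univ i) (hxu i),
    ← mul_sum]
  have h := prod_one_add_mul_div_prod_one_add_mul (s := univ) hx.injOn w fun i _ => hxu i
  have hA : ∏ i, (1 + β * x i) ≠ 0 := prod_ne_zero_iff.2 fun i _ => hxu i
  have hW : ∏ i, (1 + β * w i) ≠ 0 := prod_ne_zero_iff.2 fun i _ => hwu i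
  field_simp at h ⊢
  linear_combination -h

/-- `∏ᵢ(1+βxᵢ)/∏ᵢ(1+βwᵢ) = 1 + β Σᵢ ∏ⱼ(xᵢ ⊖ wⱼ) / ∏_{j≠i}(xᵢ ⊖ xⱼ)`,
where `a ⊖ b := (a - b)/(1 + β b)`. -/
theorem stmt2 {K : Type*} [Field K] (β : K) (n : ℕ) (hn : 1 ≤ n)
    (x w : Fin n → K)
    (hx : Function.Injective x)
    (hxu : ∀ i, 1 + β * x i ≠ 0)
    (hwu : ∀ i, 1 + β * w i ≠ 0)
    (ominus : K → K → K)
    (hominus : ∀ a b, ominus a b = (a - b) / (1 + β * b)) :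
    (∏ i, (1 + β * x i)) / (∏ i, (1 + β * w i))
      = 1 + β * ∑ i, (∏ j, ominus (x i) (w j))
            / (∏ j ∈ Finset.univ.erase i, ominus (x i) (x j)) :=
  stmt2_general β n x w hx hxu hwu ominus hominus
end

section
/- For every z ∈ K with 1 + β·z ≠ 0, 2 + β·z ≠ 0, and z ≠ x_i for all i, one has [1/((1+βz)(2+βz))] · ∏_{i=1}^n (z ⊕ x_i)/(z ⊖ x_i) = 1/(1+βz) − [∏_{i=1}^n (1+β·x_i)]/(2+βz) + Σ_{i=1}^n [x_i/(z − x_i)] · ∏_{j≠i} (x_i ⊕ x_j)/(x_i ⊖ x_j). -/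
/-!
Write `R(a, b) = (a ⊕ b)/(a ⊖ b) = (a + b + βab)(1 + βb)/(a - b)`. Multiplied by
`(1 + βz)(2 + βz)`, the identity becomes one with no denominators other than the `z - xᵢ`,
valid for every `z` off the `xᵢ`. It is proved by induction on the set of points: adding a point
`w` multiplies the left side by `R(z, w) = (1 + βw)² + w(1 + βw)(2 + βw)/(z - w)`, and the new
coefficient of `1/(z - w)` is the induction hypothesis evaluated at `z = w`.
-/

open Finset

namespace MultiplicativeFGL

variable {K : Type*} [Field K] (β : K)

def ratio (a b : K) : K := (a + b + β * a * b) * (1 + β * b) / (a - b)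

variable {β}

theorem ratio_eq_sq_add_div {a b : K} (hab : a ≠ b) :
    ratio β a b = (1 + β * b) ^ 2 + b * (1 + β * b) * (2 + β * b) / (a - b) := by
  have : a - b ≠ 0 := sub_ne_zero.mpr hab
  rw [ratio]
  field_simp
  ring

theorem ratio_div_sub {z w y : K} (hzw : z ≠ w) (hzy : z ≠ y) (hwy : w ≠ y) :
    ratio β z w / (z - y)
      = ratio β y w / (z - y) + w * (1 + β * w) * (2 + β * w) / (z - w) / (w - y) := by
  have : z - w ≠ 0 := sub_ne_zero.mpr hzw
  have : y - w ≠ 0 := sub_ne_zero.mpr hwy.symm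
  rw [ratio_eq_sq_add_div hzw, ratio_eq_sq_add_div hwy.symm]
  field_simp
  ring

variable {ι : Type*} [DecidableEq ι] (β) (x : ι → K)

def residueSum (s : Finset ι) (z : K) : K :=
  ∑ i ∈ s, x i / (z - x i) * ∏ j ∈ s.erase i, ratio β (x i) (x j)

theorem residueSum_insert {s : Finset ι} {a : ι} (ha : a ∉ s) (z : K) :
    residueSum β x (insert a s) z
      = x a / (z - x a) * ∏ j ∈ s, ratio β (x a) (x j)
        + ∑ i ∈ s, x i / (z - x i)
            * (ratio β (x i) (x a) * ∏ j ∈ s.erase i, ratio β (x i) (x j)) := by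
  rw [residueSum, sum_insert ha, erase_insert ha]
  congr 1
  refine sum_congr rfl fun i hi => ?_
  have hia : a ≠ i := fun h => ha (h ▸ hi)
  rw [erase_insert_of_ne hia, prod_insert fun h => ha (mem_of_mem_erase h)]

theorem ratio_mul_residueSum {s : Finset ι} {z w : K} (hzw : z ≠ w)
    (hz : ∀ i ∈ s, z ≠ x i) (hw : ∀ i ∈ s, w ≠ x i) :
    ratio β z w * residueSum β x s z
      = ∑ i ∈ s, x i / (z - x i) * (ratio β (x i) w * ∏ j ∈ s.erase i, ratio β (x i) (x j))
        + w * (1 + β * w) * (2 + β * w) / (z - w) * residueSum β x s w := by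
  simp only [residueSum, mul_sum, ← sum_add_distrib]
  refine sum_congr rfl fun i hi => ?_
  linear_combination (x i * ∏ j ∈ s.erase i, ratio β (x i) (x j)) *
    ratio_div_sub (β := β) hzw (hz i hi) (hw i hi)

theorem prod_ratio_eq {s : Finset ι} (hx : Set.InjOn x s) {z : K} (hz : ∀ i ∈ s, z ≠ x i) :
    ∏ i ∈ s, ratio β z (x i)
      = (2 + β * z) - (∏ i ∈ s, (1 + β * x i)) * (1 + β * z)
        + (1 + β * z) * (2 + β * z) * residueSum β x s z := by
  induction s using Finset.induction_on generalizing z with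
  | empty => simp only [residueSum, prod_empty, sum_empty]; ring
  | @insert a s ha ih =>
    have hxs : Set.InjOn x s := hx.mono (by simp)
    have hza : z ≠ x a := hz a (mem_insert_self a s)
    have hzs : ∀ i ∈ s, z ≠ x i := fun i hi => hz i (mem_insert_of_mem hi)
    have has : ∀ i ∈ s, x a ≠ x i := fun i hi h =>
      ha (hx (mem_insert_self a s) (mem_insert_of_mem hi) h ▸ hi)
    have ih_z := ih hxs hzs
    have ih_xa := ih hxs has
    have hsum := ratio_mul_residueSum β x hza hzs has
    set P := ∏ i ∈ s, (1 + β * x i)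
    have hconst : ratio β z (x a) * ((2 + β * z) - P * (1 + β * z))
        = (2 + β * z) - (1 + β * x a) * P * (1 + β * z)
          + (1 + β * z) * (2 + β * z) * (x a / (z - x a))
            * ((2 + β * x a) - P * (1 + β * x a)) := by
      have : z - x a ≠ 0 := sub_ne_zero.mpr hza
      rw [ratio_eq_sq_add_div hza]
      field_simp
      ring
    rw [prod_insert ha, prod_insert ha, residueSum_insert β x ha, ih_z, ih_xa]
    linear_combination hconst + (1 + β * z) * (2 + β * z) * hsum

end MultiplicativeFGL

open MultiplicativeFGL in
theorem stmt3_general {K : Type*} [Field K] (β : K) (n : ℕ)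
    (x : Fin n → K)
    (hx : Function.Injective x)
    (oplus ominus : K → K → K)
    (hoplus : ∀ a b, oplus a b = a + b + β * a * b)
    (hominus : ∀ a b, ominus a b = (a - b) / (1 + β * b))
    (z : K) (hz1 : 1 + β * z ≠ 0) (hz2 : 2 + β * z ≠ 0) (hzx : ∀ i, z ≠ x i) :
    (1 / ((1 + β * z) * (2 + β * z))) * ∏ i, oplus z (x i) / ominus z (x i)
      = 1 / (1 + β * z) - (∏ i, (1 + β * x i)) / (2 + β * z)
        + ∑ i, (x i / (z - x i))
            * ∏ j ∈ Finset.univ.erase i, oplus (x i) (x j) / ominus (x i) (x j) := by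
  have hratio : ∀ a b, oplus a b / ominus a b = ratio β a b := fun a b => by
    rw [hoplus, hominus, div_div_eq_mul_div, ratio]
  simp only [hratio]
  rw [prod_ratio_eq β x hx.injOn fun i _ => hzx i, residueSum]
  field_simp

/-- connective K-theory case at `t = -1` of
`M_F(z) = 1/((1+βz)(2+βz)) - β·GP₁/(2+βz)`, with `1 + β·GP₁ = ∏ᵢ(1+βxᵢ)`:
`(1/((1+βz)(2+βz))) ∏ᵢ (z ⊕ xᵢ)/(z ⊖ xᵢ)
  = 1/(1+βz) - ∏ᵢ(1+βxᵢ)/(2+βz) + Σᵢ xᵢ/(z-xᵢ) ∏_{j≠i} (xᵢ ⊕ xⱼ)/(xᵢ ⊖ xⱼ)`. -/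
theorem stmt3 {K : Type*} [Field K] (β : K) (n : ℕ) (hn : 1 ≤ n)
    (x : Fin n → K)
    (hx : Function.Injective x)
    (hxu : ∀ i, 1 + β * x i ≠ 0)
    (oplus ominus : K → K → K)
    (hoplus : ∀ a b, oplus a b = a + b + β * a * b)
    (hominus : ∀ a b, ominus a b = (a - b) / (1 + β * b))
    (z : K) (hz1 : 1 + β * z ≠ 0) (hz2 : 2 + β * z ≠ 0) (hzx : ∀ i, z ≠ x i) :
    (1 / ((1 + β * z) * (2 + β * z))) * ∏ i, oplus z (x i) / ominus z (x i)
      = 1 / (1 + β * z) - (∏ i, (1 + β * x i)) / (2 + β * z)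
        + ∑ i, (x i / (z - x i))
            * ∏ j ∈ Finset.univ.erase i, oplus (x i) (x j) / ominus (x i) (x j) :=
  stmt3_general β n x hx oplus ominus hoplus hominus z hz1 hz2 hzx
end

section
/- One has 1 + β · Σ_{i=1}^n x_i · ∏_{j≠i} (x_i ⊕ x_j)/(x_i ⊖ x_j) = ∏_{i=1}^n (1 + β·x_i). (In other words, 1 + β·GP_1(x_1,…,x_n) = ∏_{i=1}^n (1+β·x_i), where GP_1 := Σ_i x_i ∏_{j≠i} (x_i ⊕ x_j)/(x_i ⊖ x_j).) -/
open Polynomial Finset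

/-- Divided-difference lemma: for a polynomial `f` of degree `< #t`,
`∑_{y∈t} f(y)/∏_{z∈t, z≠y}(y-z)` equals the coefficient of `f` in degree `#t - 1`. -/
private lemma stmt4_divdiff {K : Type*} [Field K] [DecidableEq K] (t : Finset K) (f : K[X])
    (hf : f.degree < t.card) :
    ∑ y ∈ t, f.eval y / ∏ z ∈ t.erase y, (y - z) = f.coeff (t.card - 1) := by
  have hinj : Set.InjOn (id : K → K) t := Function.injective_id.injOn
  have h := Lagrange.eq_interpolate (s := t) (v := id) hinj hf
  have h2 := congrArg (fun p => p.coeff (t.card - 1)) h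
  simp only [Lagrange.interpolate_apply, Polynomial.finset_sum_coeff] at h2
  rw [h2]
  refine Finset.sum_congr rfl fun y hy => ?_
  have hbasis : Lagrange.basis t id y
      = C ((∏ z ∈ t.erase y, (y - z))⁻¹) * ∏ z ∈ t.erase y, (X - C z) := by
    simp only [Lagrange.basis, Lagrange.basisDivisor, id_eq]
    rw [Finset.prod_mul_distrib, ← map_prod, Finset.prod_inv_distrib]
  have hmonic : (∏ z ∈ t.erase y, (X - C z)).Monic :=
    monic_prod_of_monic _ _ fun z _ => monic_X_sub_C z
  have hdeg : (∏ z ∈ t.erase y, (X - C z)).natDegree = t.card - 1 := by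
    rw [natDegree_prod_of_monic _ _ fun z _ => monic_X_sub_C z]
    simp [Finset.card_erase_of_mem hy]
  rw [hbasis, ← mul_assoc, ← C_mul, coeff_C_mul, ← hdeg, hmonic.coeff_natDegree,
    mul_one, id_eq, div_eq_mul_inv, mul_comm (eval y f) _]

/-- Key identity: `∑_{y∈t} (y-1)·∏_{z≠y} z(yz-1)/(y-z) = ∏ t - 1` for `0 ∉ t`. -/
private lemma stmt4_key {K : Type*} [Field K] [DecidableEq K] (t : Finset K) : (0 : K) ∉ t →
    ∑ y ∈ t, (y - 1) * ∏ z ∈ t.erase y, (z * (y * z - 1) / (y - z))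
      = (∏ y ∈ t, y) - 1 := by
  induction t using Finset.strongInduction with
  | _ t IH =>
  intro h0
  by_cases hm1 : (-1 : K) ∈ t
  · -- Case B: -1 is a node; reduce to `t.erase (-1)`.
    have h0' : (0 : K) ∉ t.erase (-1) := fun h => h0 (Finset.mem_of_mem_erase h)
    have hIH := IH (t.erase (-1)) (Finset.erase_ssubset hm1) h0'
    rw [← Finset.add_sum_erase _ _ hm1, ← Finset.mul_prod_erase _ _ hm1]
    have hprod1 : ∏ z ∈ t.erase (-1 : K), (z * ((-1) * z - 1) / ((-1) - z))
        = ∏ z ∈ t.erase (-1 : K), z := by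
      refine Finset.prod_congr rfl fun z hz => ?_
      have hz1 : (-1 : K) - z ≠ 0 := by
        intro h
        exact (Finset.ne_of_mem_erase hz) (by linear_combination -h)
      rw [div_eq_iff hz1]; ring
    have hsum : ∑ y ∈ t.erase (-1 : K),
          (y - 1) * ∏ z ∈ t.erase y, (z * (y * z - 1) / (y - z))
        = ∑ y ∈ t.erase (-1 : K),
          (y - 1) * ∏ z ∈ (t.erase (-1 : K)).erase y, (z * (y * z - 1) / (y - z)) := by
      refine Finset.sum_congr rfl fun y hy => ?_
      have hy1 : y ≠ -1 := Finset.ne_of_mem_erase hy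
      have hmem : (-1 : K) ∈ t.erase y :=
        Finset.mem_erase.mpr ⟨Ne.symm hy1, hm1⟩
      rw [← Finset.mul_prod_erase _ _ hmem, Finset.erase_right_comm]
      have hy1' : y + 1 ≠ 0 := fun h => hy1 (by linear_combination h)
      have hone : (-1 : K) * (y * (-1) - 1) / (y - (-1)) = 1 := by
        rw [div_eq_one_iff_eq (by intro h; exact hy1' (by linear_combination h))]
        ring
      rw [hone, one_mul]
    rw [hprod1, hsum, hIH]
    ring
  · -- Case A: -1 is not a node; Lagrange interpolation argument.
    have hz0 : ∀ z ∈ t, z ≠ 0 := fun z hz h => h0 (h ▸ hz)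
    have hz1 : ∀ z ∈ t, z + 1 ≠ 0 := by
      intro z hz h
      have hz' : z = -1 := by linear_combination h
      exact hm1 (hz' ▸ hz)
    set N : K[X] := ∏ z ∈ t, (C (z * z) * X + C (-z)) with hN
    have hfac0 : ∀ z ∈ t, (z : K) * z ≠ 0 := fun z hz => mul_ne_zero (hz0 z hz) (hz0 z hz)
    have hNne : ∀ z ∈ t, (C (z * z) * X + C (-z) : K[X]) ≠ 0 := by
      intro z hz h
      have hd := natDegree_linear (b := -z) (hfac0 z hz)
      rw [h] at hd
      simp at hd
    have hNdeg : N.natDegree = t.card := by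
      rw [hN, natDegree_prod _ _ hNne,
        Finset.sum_congr rfl fun z hz => natDegree_linear (hfac0 z hz)]
      simp
    have hNdeglt : ∀ w : K, w ∉ t → N.degree < (((insert w t).card : ℕ) : WithBot ℕ) := by
      intro w hw
      rw [Finset.card_insert_of_notMem hw]
      calc N.degree ≤ (N.natDegree : WithBot ℕ) := degree_le_natDegree
        _ < ((t.card + 1 : ℕ) : WithBot ℕ) := by
            rw [hNdeg]; exact_mod_cast Nat.lt_succ_self t.card
    have hNcoeff : N.coeff t.card = (∏ z ∈ t, z) * ∏ z ∈ t, z := by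
      have hc : N.coeff t.card = N.leadingCoeff := by rw [Polynomial.leadingCoeff, hNdeg]
      rw [hc, hN, leadingCoeff_prod,
        Finset.prod_congr rfl fun z hz => leadingCoeff_linear (hfac0 z hz),
        Finset.prod_mul_distrib]
    have hNeval : ∀ w : K, N.eval w = ∏ z ∈ t, (z * (w * z - 1)) := by
      intro w
      rw [hN, eval_prod]
      exact Finset.prod_congr rfl fun z hz => by simp; ring
    have hDne : ∀ y ∈ t, ∏ z ∈ t.erase y, (y - z) ≠ 0 := by
      intro y hy
      exact Finset.prod_ne_zero_iff.mpr fun z hz =>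
        sub_ne_zero.mpr (Ne.symm (Finset.ne_of_mem_erase hz))
    -- Equation 1 : extra node 0
    have hEq1 : 1 + ∑ y ∈ t, N.eval y / (y * ∏ z ∈ t.erase y, (y - z))
        = (∏ z ∈ t, z) * ∏ z ∈ t, z := by
      have hd := stmt4_divdiff (insert (0 : K) t) N (hNdeglt 0 h0)
      rw [Finset.sum_insert h0, Finset.card_insert_of_notMem h0] at hd
      simp only [Nat.add_sub_cancel] at hd
      rw [Finset.erase_insert h0] at hd
      have h1 : N.eval 0 / ∏ z ∈ t, ((0 : K) - z) = 1 := by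
        rw [hNeval, div_eq_one_iff_eq]
        · exact Finset.prod_congr rfl fun z hz => by ring
        · exact Finset.prod_ne_zero_iff.mpr fun z hz => fun h =>
            hz0 z hz (by linear_combination -h)
      have h2 : ∀ y ∈ t, N.eval y / ∏ z ∈ (insert (0:K) t).erase y, (y - z)
          = N.eval y / (y * ∏ z ∈ t.erase y, (y - z)) := by
        intro y hy
        rw [Finset.erase_insert_of_ne (Ne.symm (hz0 y hy)),
          Finset.prod_insert (fun h => h0 (Finset.mem_of_mem_erase h)), sub_zero]
      rw [h1, Finset.sum_congr rfl h2] at hd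
      rw [hd, hNcoeff]
    -- Equation 2 : extra node -1
    have hEq2 : (∏ z ∈ t, z) + ∑ y ∈ t, N.eval y / ((y + 1) * ∏ z ∈ t.erase y, (y - z))
        = (∏ z ∈ t, z) * ∏ z ∈ t, z := by
      have hd := stmt4_divdiff (insert (-1 : K) t) N (hNdeglt (-1) hm1)
      rw [Finset.sum_insert hm1, Finset.card_insert_of_notMem hm1] at hd
      simp only [Nat.add_sub_cancel] at hd
      rw [Finset.erase_insert hm1] at hd
      have h1 : N.eval (-1) / ∏ z ∈ t, ((-1 : K) - z) = ∏ z ∈ t, z := by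
        rw [hNeval, ← Finset.prod_div_distrib]
        refine Finset.prod_congr rfl fun z hz => ?_
        have hne : (-1 : K) - z ≠ 0 := fun h => hz1 z hz (by linear_combination -h)
        rw [div_eq_iff hne]; ring
      have h2 : ∀ y ∈ t, N.eval y / ∏ z ∈ (insert (-1:K) t).erase y, (y - z)
          = N.eval y / ((y + 1) * ∏ z ∈ t.erase y, (y - z)) := by
        intro y hy
        have hy1 : y ≠ -1 := fun h => hm1 (h ▸ hy)
        rw [Finset.erase_insert_of_ne (Ne.symm hy1),
          Finset.prod_insert (fun h => hm1 (Finset.mem_of_mem_erase h)),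
          show y - (-1) = y + 1 from by ring]
      rw [h1, Finset.sum_congr rfl h2] at hd
      rw [hd, hNcoeff]
    -- combine
    have hterm : ∀ y ∈ t, (y - 1) * ∏ z ∈ t.erase y, (z * (y * z - 1) / (y - z))
        = N.eval y / (y * ∏ z ∈ t.erase y, (y - z))
          - N.eval y / ((y + 1) * ∏ z ∈ t.erase y, (y - z)) := by
      intro y hy
      have hE : N.eval y = (y * (y * y - 1)) * ∏ z ∈ t.erase y, (z * (y * z - 1)) := by
        rw [hNeval, ← Finset.mul_prod_erase t _ hy]
      rw [Finset.prod_div_distrib, hE]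
      have hy0 := hz0 y hy
      have hy1 := hz1 y hy
      have hDy := hDne y hy
      field_simp
      ring
    rw [Finset.sum_congr rfl hterm, Finset.sum_sub_distrib]
    have e1 : ∑ y ∈ t, N.eval y / (y * ∏ z ∈ t.erase y, (y - z))
        = (∏ z ∈ t, z) * (∏ z ∈ t, z) - 1 := by linear_combination hEq1
    have e2 : ∑ y ∈ t, N.eval y / ((y + 1) * ∏ z ∈ t.erase y, (y - z))
        = (∏ z ∈ t, z) * (∏ z ∈ t, z) - ∏ z ∈ t, z := by linear_combination hEq2
    rw [e1, e2]
    ring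

/-- `1 + β Σᵢ xᵢ ∏_{j≠i} (xᵢ ⊕ xⱼ)/(xᵢ ⊖ xⱼ) = ∏ᵢ (1 + β xᵢ)`,
i.e. `1 + β·GP₁(x₁,…,xₙ) = ∏ᵢ(1+βxᵢ)`. -/
theorem stmt4 {K : Type*} [Field K] (β : K) (n : ℕ) (hn : 1 ≤ n)
    (x : Fin n → K)
    (hx : Function.Injective x)
    (hxu : ∀ i, 1 + β * x i ≠ 0)
    (oplus ominus : K → K → K)
    (hoplus : ∀ a b, oplus a b = a + b + β * a * b)
    (hominus : ∀ a b, ominus a b = (a - b) / (1 + β * b)) :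
    1 + β * ∑ i, x i * ∏ j ∈ Finset.univ.erase i, oplus (x i) (x j) / ominus (x i) (x j)
      = ∏ i, (1 + β * x i) := by
  classical
  by_cases hβ : β = 0
  · simp [hβ]
  set y : Fin n → K := fun i => 1 + β * x i with hy
  have hyinj : Function.Injective y := by
    intro i j h
    apply hx
    simp only [hy] at h
    have h' : β * x i = β * x j := by linear_combination h
    exact mul_left_cancel₀ hβ h'
  have hratio : ∀ i j : Fin n, i ≠ j →
      oplus (x i) (x j) / ominus (x i) (x j)
        = y j * (y i * y j - 1) / (y i - y j) := by
    intro i j hij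
    have hxij : x i - x j ≠ 0 := sub_ne_zero.mpr (fun h => hij (hx h))
    have hd : y i - y j ≠ 0 := sub_ne_zero.mpr (fun h => hij (hyinj h))
    rw [hoplus, hominus, div_div_eq_mul_div, div_eq_div_iff hxij hd]
    simp only [hy]
    ring
  have hsum : β * ∑ i, x i * ∏ j ∈ Finset.univ.erase i, oplus (x i) (x j) / ominus (x i) (x j)
      = ∑ i, (y i - 1) * ∏ j ∈ Finset.univ.erase i, (y j * (y i * y j - 1) / (y i - y j)) := by
    rw [Finset.mul_sum]
    refine Finset.sum_congr rfl fun i _ => ?_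
    rw [Finset.prod_congr rfl fun j hj => hratio i j (Ne.symm (Finset.ne_of_mem_erase hj))]
    have hyi : y i - 1 = β * x i := by simp only [hy]; ring
    rw [hyi]; ring
  set t : Finset K := Finset.image y Finset.univ with ht
  have h0t : (0 : K) ∉ t := by
    simp only [ht, Finset.mem_image, Finset.mem_univ, true_and, not_exists]
    intro i h
    exact hxu i h
  have hkey := stmt4_key t h0t
  have htrans : ∑ w ∈ t, (w - 1) * ∏ z ∈ t.erase w, (z * (w * z - 1) / (w - z))
      = ∑ i, (y i - 1) * ∏ j ∈ Finset.univ.erase i, (y j * (y i * y j - 1) / (y i - y j)) := by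
    rw [ht, Finset.sum_image (fun a _ b _ h => hyinj h)]
    refine Finset.sum_congr rfl fun i _ => ?_
    congr 1
    rw [← Finset.image_erase hyinj, Finset.prod_image (fun a _ b _ h => hyinj h)]
  have hprodt : ∏ w ∈ t, w = ∏ i, y i := by
    rw [ht, Finset.prod_image (fun a _ b _ h => hyinj h)]
  rw [hsum, ← htrans, hkey, hprodt]
  ring
end

section
/- One has [∏_{j=1}^n (1+β·x_j)] · Σ_{i=1}^n [x_i/(1+β·x_i)] · ∏_{j≠i} (x_i ⊕ x_j)/((x_i ⊖ x_j)·(1+β·x_j)) = Σ_{i=1}^n x_i · ∏_{j≠i} (x_i ⊕ x_j)/(x_i ⊖ x_j). -/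
/-- vanishing of the coefficient of `z^{n+1}` in the proof of
Proposition 13:
`(∏ⱼ(1+βxⱼ)) Σᵢ xᵢ/(1+βxᵢ) ∏_{j≠i} (xᵢ ⊕ xⱼ)/((xᵢ ⊖ xⱼ)(1+βxⱼ))
  = Σᵢ xᵢ ∏_{j≠i} (xᵢ ⊕ xⱼ)/(xᵢ ⊖ xⱼ)`. -/
theorem stmt5 {K : Type*} [Field K] (β : K) (n : ℕ) (hn : 1 ≤ n)
    (x : Fin n → K)
    (hx : Function.Injective x)
    (hxu : ∀ i, 1 + β * x i ≠ 0)
    (oplus ominus : K → K → K)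
    (hoplus : ∀ a b, oplus a b = a + b + β * a * b)
    (hominus : ∀ a b, ominus a b = (a - b) / (1 + β * b)) :
    (∏ j, (1 + β * x j))
        * ∑ i, (x i / (1 + β * x i))
            * ∏ j ∈ Finset.univ.erase i,
                oplus (x i) (x j) / (ominus (x i) (x j) * (1 + β * x j))
      = ∑ i, x i * ∏ j ∈ Finset.univ.erase i, oplus (x i) (x j) / ominus (x i) (x j) := by
  rw [Finset.mul_sum]
  apply Finset.sum_congr rfl
  intro i _
  have h1 : ∏ j ∈ Finset.univ.erase i,
      oplus (x i) (x j) / (ominus (x i) (x j) * (1 + β * x j))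
        = ∏ j ∈ Finset.univ.erase i, oplus (x i) (x j) / (x i - x j) := by
    apply Finset.prod_congr rfl
    intro j _
    rw [hominus, div_mul_cancel₀ _ (hxu j)]
  have h2 : ∏ j ∈ Finset.univ.erase i,
      oplus (x i) (x j) / ominus (x i) (x j)
        = (∏ j ∈ Finset.univ.erase i, oplus (x i) (x j) / (x i - x j))
            * ∏ j ∈ Finset.univ.erase i, (1 + β * x j) := by
    rw [← Finset.prod_mul_distrib]
    apply Finset.prod_congr rfl
    intro j _
    rw [hominus, div_div_eq_mul_div, div_mul_eq_mul_div]
  rw [h1, h2, ← Finset.mul_prod_erase _ _ (Finset.mem_univ i)]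
  have h3 : ((1 + β * x i) * ∏ j ∈ Finset.univ.erase i, (1 + β * x j))
      * ((x i / (1 + β * x i)) * ∏ j ∈ Finset.univ.erase i, (oplus (x i) (x j) / (x i - x j)))
      = (x i / (1 + β * x i) * (1 + β * x i))
        * ((∏ j ∈ Finset.univ.erase i, oplus (x i) (x j) / (x i - x j))
            * ∏ j ∈ Finset.univ.erase i, (1 + β * x j)) := by ring
  rw [h3, div_mul_cancel₀ _ (hxu i)]
end

section
/- In the two-variable formal power series ring R[[Z,W]] one has (1 + β·Z) · (1 + (W + β)·Z) · S(Z,W) = 1 − Z·W. (Equivalently: the expansion of (z_2 ⊖ z_1)/(z_2 ⊕ z_1) in the region where z_1 is small and z_2 is large is Σ_{i≥j≥0} g_{i,j} z_1^i z_2^{−j}, upon setting Z = z_1 and W = 1/z_2, where z_2 ⊖ z_1 = (z_2 − z_1)/(1+βz_1) and z_2 ⊕ z_1 = z_2 + z_1 + βz_1z_2.) -/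
/-!
The factor `1 + βZ` only inverts a geometric series, so the content is the identity
`(1 + (W + β)Z) S = (1 - ZW) ∑ (-βZ)^i`. Writing `g i j = (-1)^i β^(i-j) gBinom i j`, its
coefficients say that `gBinom` obeys Pascal's rule
`gBinom (n+1) (m+1) = gBinom n m + gBinom n (m+1)` up to a correction `δ_{m,0}`, and that
correction produces the term `-ZW`.
-/

open MvPowerSeries Finsupp

namespace MvPowerSeries

theorem coeff_X_mul {σ R : Type*} [CommSemiring R] [DecidableEq σ] (s : σ)
    (φ : MvPowerSeries σ R) (d : σ →₀ ℕ) :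
    coeff d (X s * φ) = if d s = 0 then 0 else coeff (d - single s 1) φ := by
  rw [X, coeff_monomial_mul, one_mul]
  simp only [single_le_iff, Nat.one_le_iff_ne_zero, ite_not]

section Fin2

variable {R : Type*} [CommRing R]

def ofFun₂ (f : ℕ → ℕ → R) : MvPowerSeries (Fin 2) R := fun d => f (d 0) (d 1)

@[simp]
theorem coeff_ofFun₂ (f : ℕ → ℕ → R) (d : Fin 2 →₀ ℕ) : coeff d (ofFun₂ f) = f (d 0) (d 1) :=
  rfl

theorem ofFun₂_add (f g : ℕ → ℕ → R) : ofFun₂ f + ofFun₂ g = ofFun₂ (f + g) := rfl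

theorem ofFun₂_sub (f g : ℕ → ℕ → R) : ofFun₂ f - ofFun₂ g = ofFun₂ (f - g) := rfl

theorem one_eq_ofFun₂ :
    (1 : MvPowerSeries (Fin 2) R) = ofFun₂ fun i j => if i = 0 ∧ j = 0 then 1 else 0 := by
  ext d
  simp [coeff_one, Finsupp.ext_iff, Fin.forall_fin_two]

theorem C_mul_ofFun₂ (a : R) (f : ℕ → ℕ → R) :
    C a * ofFun₂ f = ofFun₂ fun i j => a * f i j := by
  ext d
  simp [coeff_C_mul]

theorem X_zero_mul_ofFun₂ (f : ℕ → ℕ → R) :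
    X 0 * ofFun₂ f = ofFun₂ fun i j => if i = 0 then 0 else f (i - 1) j := by
  ext d
  simp [coeff_X_mul]

theorem X_one_mul_ofFun₂ (f : ℕ → ℕ → R) :
    X 1 * ofFun₂ f = ofFun₂ fun i j => if j = 0 then 0 else f i (j - 1) := by
  ext d
  simp [coeff_X_mul]

theorem one_add_C_mul_X_zero_mul_ofFun₂_geometric (β : R) :
    (1 + C β * X 0) * ofFun₂ (fun i j => if j = 0 then (-β) ^ i else 0) = 1 := by
  rw [add_mul, one_mul, mul_assoc, X_zero_mul_ofFun₂, C_mul_ofFun₂, ofFun₂_add, one_eq_ofFun₂]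
  congr 1
  funext i j
  rcases i with _ | n <;> rcases j with _ | m <;> simp [pow_succ, mul_comm]

end Fin2

end MvPowerSeries

def gBinom (R : Type*) [CommRing R] (i j : ℕ) : R :=
  2 * i.choose j + i.choose (j + 1) - if j = 0 then 1 else 0

section gBinom

variable {R : Type*} [CommRing R]

theorem gBinom_zero_left (j : ℕ) : gBinom R 0 j = if j = 0 then 1 else 0 := by
  rcases j with _ | j <;> norm_num [gBinom]

theorem gBinom_succ_zero (n : ℕ) : gBinom R (n + 1) 0 = gBinom R n 0 + 1 := by
  simp only [gBinom, Nat.choose_zero_right, zero_add, Nat.choose_one_right]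
  push_cast
  ring

theorem gBinom_succ_succ (n m : ℕ) :
    gBinom R (n + 1) (m + 1) = gBinom R n m + gBinom R n (m + 1) + if m = 0 then 1 else 0 := by
  simp only [gBinom, Nat.choose_succ_succ' n, Nat.cast_add]
  split_ifs <;> ring

theorem gBinom_eq_zero_of_lt {i j : ℕ} (h : i < j) : gBinom R i j = 0 := by
  simp [gBinom, Nat.choose_eq_zero_of_lt h, Nat.choose_eq_zero_of_lt (h.trans j.lt_succ_self),
    Nat.ne_zero_of_lt h]

/-- For `n ≤ m` the truncated exponents disagree, but then the `gBinom` factor vanishes. -/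
theorem mul_pow_sub_succ_mul_gBinom (β : R) (n m : ℕ) :
    β * (β ^ (n - (m + 1)) * gBinom R n (m + 1)) = β ^ (n - m) * gBinom R n (m + 1) := by
  rcases Nat.lt_or_ge m n with h | h
  · rw [← mul_assoc, ← pow_succ', Nat.sub_succ', Nat.sub_add_cancel (Nat.sub_pos_of_lt h)]
  · simp [gBinom_eq_zero_of_lt (Nat.lt_succ_of_le h)]

theorem one_add_mul_X_zero_mul_ofFun₂_gBinom (β : R) :
    (1 + (X 1 + C β) * X 0) * ofFun₂ (fun i j => (-1) ^ i * β ^ (i - j) * gBinom R i j)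
      = (1 - X 0 * X 1) * ofFun₂ (fun i j => if j = 0 then (-β) ^ i else 0) := by
  have expand : ∀ φ : MvPowerSeries (Fin 2) R,
      (1 + (X 1 + C β) * X 0) * φ = φ + X 1 * (X 0 * φ) + C β * (X 0 * φ) := fun φ => by ring
  rw [expand, sub_mul, one_mul, mul_assoc]
  simp only [X_zero_mul_ofFun₂, X_one_mul_ofFun₂, C_mul_ofFun₂, ofFun₂_add, ofFun₂_sub]
  congr 1
  funext i j
  rcases i with _ | n
  · simp [gBinom_zero_left]
  rcases j with _ | m
  · simp only [Pi.add_apply, Pi.sub_apply, mul_ite, mul_zero, Nat.add_one_ne_zero, if_false,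
      if_true, add_tsub_cancel_right, tsub_zero, gBinom_succ_zero, add_zero, sub_zero]
    ring
  · have hcorner : (if m = 0 then (-β) ^ n else 0)
        = (-1 : R) ^ n * β ^ (n - m) * if m = 0 then 1 else 0 := by
      split_ifs with hm <;> simp [hm, neg_pow β]
    simp only [Pi.add_apply, Pi.sub_apply, mul_ite, mul_zero, Nat.add_one_ne_zero, if_false,
      add_tsub_cancel_right, Nat.reduceSubDiff, gBinom_succ_succ, zero_sub]
    rw [hcorner]
    linear_combination (-1) ^ n * mul_pow_sub_succ_mul_gBinom β n m

end gBinom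

/-- Lemma 14: with `g i j = (-1)^i β^{i-j} (2C(i,j)+C(i,j+1)-δ_{j,0})`
and `S := Σ_{i ≥ j ≥ 0} g_{i,j} Z^i W^j ∈ R[[Z,W]]`, one has
`(1+βZ)(1+(W+β)Z) S = 1 - Z W`.  (This is the identity
`(z₂ ⊖ z₁)/(z₂ ⊕ z₁) = Σ_{i≥j≥0} g_{i,j} z₁^i z₂^{-j}` with `Z = z₁`, `W = 1/z₂`.) -/
theorem stmt6 {R : Type*} [CommRing R] (β : R)
    (g : ℕ → ℕ → R)
    (hg : ∀ i j, j ≤ i →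
      g i j = (-1) ^ i * β ^ (i - j)
        * (2 * (Nat.choose i j : R) + (Nat.choose i (j + 1) : R)
            - if j = 0 then 1 else 0))
    (S : MvPowerSeries (Fin 2) R)
    (hS : ∀ d : Fin 2 →₀ ℕ,
      MvPowerSeries.coeff d S = if d 1 ≤ d 0 then g (d 0) (d 1) else 0) :
    (1 + (MvPowerSeries.C (σ := Fin 2) (R := R) β) * MvPowerSeries.X 0)
      * (1 + (MvPowerSeries.X 1 + (MvPowerSeries.C (σ := Fin 2) (R := R) β)) * MvPowerSeries.X 0)
      * S
    = 1 - MvPowerSeries.X 0 * MvPowerSeries.X 1 := by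
  have hS' : S = ofFun₂ fun i j => (-1) ^ i * β ^ (i - j) * gBinom R i j := by
    ext d
    rw [hS, coeff_ofFun₂]
    split_ifs with h
    · exact hg _ _ h
    · rw [gBinom_eq_zero_of_lt (not_le.mp h), mul_zero]
  rw [hS', mul_assoc, one_add_mul_X_zero_mul_ofFun₂_gBinom, mul_left_comm,
    one_add_C_mul_X_zero_mul_ofFun₂_geometric, mul_one]
end

section
/- For every integer k ≥ 1: GP_k · GP_1 = GP_{k,1} + β·GP_{k+1,1} + GP_{k+1}. -/
open Finset

/-- The basic ratio `(u ⊕ v)/(u ⊖ v)` written with a single division. -/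
noncomputable def rr {K : Type*} [Field K] (β u v : K) : K :=
  (u + v + β * u * v) * (1 + β * v) / (u - v)

noncomputable def PP {K : Type*} [Field K] (β : K) {n : ℕ} (x : Fin n → K) (a : Fin n) : K :=
  ∏ j ∈ Finset.univ.erase a, rr β (x a) (x j)

noncomputable def QQ {K : Type*} [Field K] (β : K) {n : ℕ} (x : Fin n → K) (a b : Fin n) : K :=
  ∏ j ∈ (Finset.univ.erase a).erase b, rr β (x b) (x j)

/-- The key Lagrange-type identity, proved by induction on the finite set `S`. -/
lemma key_identity {K : Type*} [Field K] (β : K) {ι : Type*} [DecidableEq ι]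
    (y : ι → K) (S : Finset ι) :
    (∀ a ∈ S, ∀ b ∈ S, a ≠ b → y a ≠ y b) →
    ∀ t : K, (∀ j ∈ S, t ≠ y j) →
    (∏ j ∈ S, rr β t (y j)) +
      (1 + β * t) * ∑ b ∈ S, (y b * (2 + β * y b) / (y b - t)) *
        ∏ j ∈ S.erase b, rr β (y b) (y j) = 1 := by
  induction S using Finset.induction_on with
  | empty => intro _ t _; simp
  | @insert c S hc ih =>
    intro hdist t ht
    have htc : t ≠ y c := ht c (Finset.mem_insert_self _ _)
    have htS : ∀ j ∈ S, t ≠ y j := fun j hj => ht j (Finset.mem_insert_of_mem hj)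
    have hcS : ∀ j ∈ S, y c ≠ y j := fun j hj =>
      hdist c (Finset.mem_insert_self _ _) j (Finset.mem_insert_of_mem hj)
        (by rintro rfl; exact hc hj)
    have hdS : ∀ a ∈ S, ∀ b ∈ S, a ≠ b → y a ≠ y b := fun a ha b hb =>
      hdist a (Finset.mem_insert_of_mem ha) b (Finset.mem_insert_of_mem hb)
    have iht := ih hdS t htS
    have ihc := ih hdS (y c) hcS
    have e3 : t - y c ≠ 0 := sub_ne_zero.mpr htc
    rw [Finset.prod_insert hc, Finset.sum_insert hc, Finset.erase_insert hc]
    have hrw : ∀ b ∈ S,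
        (y b * (2 + β * y b) / (y b - t)) *
            ∏ j ∈ (insert c S).erase b, rr β (y b) (y j)
          = (1 + β * y c) ^ 2 *
              ((y b * (2 + β * y b) / (y b - t)) * ∏ j ∈ S.erase b, rr β (y b) (y j)) +
            ((1 + β * y c) * (y c * (2 + β * y c))) *
              (((y b * (2 + β * y b) / (y b - t)) * ∏ j ∈ S.erase b, rr β (y b) (y j) -
                (y b * (2 + β * y b) / (y b - y c)) * ∏ j ∈ S.erase b, rr β (y b) (y j)) /
                (t - y c)) := by
      intro b hb
      have hbc : b ≠ c := by rintro rfl; exact hc hb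
      rw [Finset.erase_insert_of_ne (Ne.symm hbc),
        Finset.prod_insert (fun h => hc (Finset.mem_of_mem_erase h))]
      have h1 : y b ≠ t := fun h => htS b hb h.symm
      have h2 : y b ≠ y c := fun h => (hcS b hb) h.symm
      have e1 : y b - t ≠ 0 := sub_ne_zero.mpr h1
      have e2 : y b - y c ≠ 0 := sub_ne_zero.mpr h2
      have hs : (y b * (2 + β * y b) / (y b - t)) * rr β (y b) (y c)
          = (1 + β * y c) ^ 2 * (y b * (2 + β * y b) / (y b - t)) +
            ((1 + β * y c) * (y c * (2 + β * y c))) *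
              ((y b * (2 + β * y b) / (y b - t) - y b * (2 + β * y b) / (y b - y c)) /
                (t - y c)) := by
        unfold rr
        field_simp
        ring
      linear_combination (∏ j ∈ S.erase b, rr β (y b) (y j)) * hs
    rw [Finset.sum_congr rfl hrw, Finset.sum_add_distrib, ← Finset.mul_sum,
      ← Finset.mul_sum, ← Finset.sum_div, Finset.sum_sub_distrib]
    have hPt : (∏ j ∈ S, rr β t (y j))
        = 1 - (1 + β * t) * ∑ b ∈ S, (y b * (2 + β * y b) / (y b - t)) *
            ∏ j ∈ S.erase b, rr β (y b) (y j) := by linear_combination iht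
    have hPc : (∏ j ∈ S, rr β (y c) (y j))
        = 1 - (1 + β * y c) * ∑ b ∈ S, (y b * (2 + β * y b) / (y b - y c)) *
            ∏ j ∈ S.erase b, rr β (y b) (y j) := by linear_combination ihc
    rw [hPt, hPc]
    have e4 : y c - t ≠ 0 := sub_ne_zero.mpr (Ne.symm htc)
    generalize (∑ b ∈ S, (y b * (2 + β * y b) / (y b - t)) *
        ∏ j ∈ S.erase b, rr β (y b) (y j)) = A
    generalize (∑ b ∈ S, (y b * (2 + β * y b) / (y b - y c)) *
        ∏ j ∈ S.erase b, rr β (y b) (y j)) = B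
    have hrrtc : rr β t (y c) = (t + y c + β * t * y c) * (1 + β * y c) / (t - y c) := rfl
    rw [hrrtc]
    field_simp
    ring

lemma pairsum {K : Type*} [AddCommMonoid K] {n : ℕ} (f : Fin n × Fin n → K) :
    ∑ p ∈ Finset.univ.filter (fun p : Fin n × Fin n => p.1 ≠ p.2), f p
      = ∑ a, ∑ b ∈ Finset.univ.erase a, f (a, b) := by
  rw [Finset.sum_filter, ← Finset.univ_product_univ, Finset.sum_product]
  refine Finset.sum_congr rfl fun a _ => ?_
  rw [← Finset.sum_filter]
  congr 1
  ext b
  simp [ne_comm]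

/-- Proposition 18 (2), first part: for `k ≥ 1`,
`GP_k · GP_1 = GP_{k,1} + β GP_{k+1,1} + GP_{k+1}`. -/
theorem stmt11 {K : Type*} [Field K] (β : K) (n : ℕ) (hn : 1 ≤ n)
    (x : Fin n → K)
    (hx : Function.Injective x)
    (hxu : ∀ i, 1 + β * x i ≠ 0)
    (oplus ominus : K → K → K)
    (hoplus : ∀ a b, oplus a b = a + b + β * a * b)
    (hominus : ∀ a b, ominus a b = (a - b) / (1 + β * b))
    (GP : ℕ → K) (GP2 : ℕ → ℕ → K)
    (hGP : ∀ m, 1 ≤ m → GP m =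
      ∑ a, x a ^ m
        * ∏ j ∈ Finset.univ.erase a, oplus (x a) (x j) / ominus (x a) (x j))
    (hGP2 : ∀ k l, 1 ≤ k → 1 ≤ l → GP2 k l =
      ∑ p ∈ Finset.univ.filter (fun p : Fin n × Fin n => p.1 ≠ p.2),
        x p.1 ^ k * x p.2 ^ l
          * (∏ j ∈ Finset.univ.erase p.1, oplus (x p.1) (x j) / ominus (x p.1) (x j))
          * ∏ j ∈ Finset.univ.filter (fun j => j ≠ p.1 ∧ j ≠ p.2),
              oplus (x p.2) (x j) / ominus (x p.2) (x j))
    (k : ℕ) (hk : 1 ≤ k) :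
    GP k * GP 1 = GP2 k 1 + β * GP2 (k + 1) 1 + GP (k + 1) := by
  classical
  have hro : ∀ a b : K, oplus a b / ominus a b = rr β a b := by
    intro a b
    rw [hoplus, hominus, div_div_eq_mul_div, rr]
  -- rewrite GP in terms of PP
  have hGPr : ∀ m, 1 ≤ m → GP m = ∑ a, x a ^ m * PP β x a := by
    intro m hm
    rw [hGP m hm]
    refine Finset.sum_congr rfl fun a _ => ?_
    rw [Finset.prod_congr rfl fun j _ => hro (x a) (x j)]
    rfl
  -- the filter set in GP2 is a double erase
  have hfe : ∀ a b : Fin n, Finset.univ.filter (fun j => j ≠ a ∧ j ≠ b)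
      = (Finset.univ.erase a).erase b := by
    intro a b; ext j; simp [Finset.mem_erase, and_comm]
  -- rewrite GP2 in terms of PP, QQ
  have hGP2r : ∀ m, 1 ≤ m → GP2 m 1
      = ∑ a, ∑ b ∈ Finset.univ.erase a, x a ^ m * x b * PP β x a * QQ β x a b := by
    intro m hm
    rw [hGP2 m 1 hm le_rfl, pairsum]
    refine Finset.sum_congr rfl fun a _ => Finset.sum_congr rfl fun b hb => ?_
    simp only [pow_one]
    rw [hfe a b, Finset.prod_congr rfl fun j _ => hro (x a) (x j),
      Finset.prod_congr rfl fun j _ => hro (x b) (x j)]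
    rfl
  have hk1 : 1 ≤ k + 1 := Nat.le_succ_of_le hk
  rw [hGPr k hk, hGPr 1 le_rfl, hGPr (k+1) hk1, hGP2r k hk, hGP2r (k+1) hk1,
    Finset.sum_mul_sum]
  rw [Finset.mul_sum, ← Finset.sum_add_distrib, ← Finset.sum_add_distrib]
  refine Finset.sum_congr rfl fun a _ => ?_
  -- per-a computation
  have hkeya : PP β x a + (1 + β * x a) *
      ∑ b ∈ Finset.univ.erase a, (x b * (2 + β * x b) / (x b - x a)) * QQ β x a b = 1 := by
    have hd : ∀ i ∈ Finset.univ.erase a, ∀ j ∈ Finset.univ.erase a, i ≠ j → x i ≠ x j :=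
      fun i _ j _ h e => h (hx e)
    have ht : ∀ j ∈ Finset.univ.erase a, x a ≠ x j :=
      fun j hj e => (Finset.ne_of_mem_erase hj) (hx e.symm)
    exact key_identity β x _ hd (x a) ht
  have hterm : ∀ b ∈ Finset.univ.erase a,
      (x a ^ k * PP β x a) * (x b ^ 1 * PP β x b)
        = x a ^ k * x b * PP β x a * QQ β x a b
          + β * (x a ^ (k+1) * x b * PP β x a * QQ β x a b)
          + (x a ^ (k+1) * PP β x a) *
              ((1 + β * x a) * ((x b * (2 + β * x b) / (x b - x a)) * QQ β x a b)) := by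
    intro b hb
    have hba : b ≠ a := Finset.ne_of_mem_erase hb
    have hxba : x b ≠ x a := fun e => hba (hx e)
    have h0 : x b - x a ≠ 0 := sub_ne_zero.mpr hxba
    have haeb : a ∈ Finset.univ.erase b := Finset.mem_erase.mpr ⟨fun h => hba h.symm, Finset.mem_univ a⟩
    have hPb : PP β x b = rr β (x b) (x a) * QQ β x a b := by
      unfold PP QQ
      rw [Finset.erase_right_comm]
      exact (Finset.mul_prod_erase _ _ haeb).symm
    rw [hPb, pow_one]
    have hs : x b * rr β (x b) (x a)
        = x b + β * (x a * x b) + x a * (1 + β * x a) * (x b * (2 + β * x b) / (x b - x a)) := by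
      unfold rr; field_simp; ring
    linear_combination (x a ^ k * PP β x a * QQ β x a b) * hs
  have hdiag : (∑ b, x a ^ k * PP β x a * (x b ^ 1 * PP β x b))
      = x a ^ k * PP β x a * (x a ^ 1 * PP β x a)
        + ∑ b ∈ Finset.univ.erase a, x a ^ k * PP β x a * (x b ^ 1 * PP β x b) :=
    (Finset.add_sum_erase _ (fun b => x a ^ k * PP β x a * (x b ^ 1 * PP β x b))
      (Finset.mem_univ a)).symm
  rw [hdiag, Finset.sum_congr rfl hterm, Finset.sum_add_distrib, Finset.sum_add_distrib,
    ← Finset.mul_sum, ← Finset.mul_sum, ← Finset.mul_sum]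
  simp only [pow_one]
  linear_combination (x a ^ (k+1) * PP β x a) * hkeya
end

section
/- For every partition λ = (λ_1 ≥ λ_2 ≥ … ≥ λ_r ≥ 1) with r ≤ n, one has Q_λ = det( e(λ_i + j − i, r − i) )_{1≤i,j≤r} and also Q_λ = det( e(λ_i + j − i, j − i) )_{1≤i,j≤r}. -/
/-!
Below degree `n - 1` the Laurent expansion at `0` of the product part of `N_s` vanishes, since
`z / (z - x_a)` has a zero at `0` for all but at most one `a`. Hence
`e(m, s) = Σ_a (1 + βx_a)^(-s) R_a x_a^(m-1)` for every `m ≥ 2 - n`, which covers all entries of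
both matrices. Each matrix is then a product of an `r × n` matrix with an `n × r` Vandermonde-type
matrix, and expanding the determinant multilinearly in the rows gives a sum over injections
`a : Fin r → Fin n` of Vandermonde determinants. Term by term this is the summand of `Q_λ`,
because `∏_{j ∉ {a(1), …, a(i)}} x_{a(i)} / (x_{a(i)} ⊖ x_j)` is `R_{a(i)} / x_{a(i)}` divided by
the factors with `j = a(1), …, a(i-1)`. In the second determinant the Vandermonde variables are
`y = x / (1 + βx)`, and `y_b - y_c = (x_b - x_c) / ((1 + βx_b)(1 + βx_c))`.
-/

open scoped LaurentSeries
open IsDedekindDomain.HeightOneSpectrum WithZero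

namespace RatFunc

variable {K : Type*} [Field K]

theorem valuation_X : Valued.v (X : RatFunc K) = exp (-1) := by
  rw [v_def, ← algebraMap_X, valuation_of_algebraMap,
    intValuation_singleton _ Polynomial.X_ne_zero rfl]

theorem valuation_algebraMap_eq_one {p : Polynomial K} (hp : p.coeff 0 ≠ 0) :
    Valued.v (algebraMap (Polynomial K) (RatFunc K) p) = 1 := by
  rwa [v_def, valuation_eq_one_iff_notMem, Polynomial.idealX_span, Ideal.mem_span_singleton,
    Polynomial.X_dvd_iff]

theorem valuation_C_le_one (c : K) : Valued.v (C c : RatFunc K) ≤ 1 := by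
  rw [v_def, ← algebraMap_C]
  exact valuation_le_one _ _

theorem valuation_X_sub_C {c : K} (hc : c ≠ 0) : Valued.v (X - C c : RatFunc K) = 1 := by
  rw [← algebraMap_X, ← algebraMap_C, ← map_sub]
  exact valuation_algebraMap_eq_one (by simpa using hc)

theorem valuation_one_add_C_mul_X (β : K) : Valued.v (1 + C β * X : RatFunc K) = 1 := by
  rw [← algebraMap_X, ← algebraMap_C, ← map_mul, ← map_one (algebraMap (Polynomial K) (RatFunc K)),
    ← map_add]
  exact valuation_algebraMap_eq_one (by simp)

theorem valuation_X_mul_C_mul_inv_X_sub_C_le (u : K) {c : K} (hc : c ≠ 0) :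
    Valued.v (X * C u * (X - C c)⁻¹ : RatFunc K) ≤ exp (-1) := by
  rw [map_mul, map_mul, map_inv₀, valuation_X_sub_C hc, inv_one, mul_one, valuation_X]
  exact mul_le_of_le_one_right' (valuation_C_le_one u)

theorem valuation_X_mul_C_mul_inv_X_sub_C_le_one (u c : K) :
    Valued.v (X * C u * (X - C c)⁻¹ : RatFunc K) ≤ 1 := by
  rcases eq_or_ne c 0 with rfl | hc
  · rw [map_zero, sub_zero, mul_comm X, mul_assoc, mul_inv_cancel₀ X_ne_zero, mul_one]
    exact valuation_C_le_one u
  · refine (valuation_X_mul_C_mul_inv_X_sub_C_le u hc).trans ?_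
    rw [← exp_zero]
    exact exp_le_exp.2 (by norm_num)

theorem coe_C (c : K) : ((C c : RatFunc K) : K⸨X⸩) = HahnSeries.C c := by
  rw [← algebraMap_C, ← IsScalarTower.algebraMap_apply]
  simp

theorem coeff_coe_C_mul (c : K) (f : RatFunc K) (k : ℤ) :
    ((C c * f : RatFunc K) : K⸨X⸩).coeff k = c * (f : K⸨X⸩).coeff k := by
  rw [map_mul, coe_C, HahnSeries.C_mul_eq_smul, HahnSeries.coeff_smul, smul_eq_mul]

theorem coe_X_sub_C (c : K) :
    ((X - C c : RatFunc K) : K⸨X⸩)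
      = HahnSeries.ofPowerSeries ℤ K (PowerSeries.X - PowerSeries.C c) := by
  simp [coe_C]

/-- For `c = 0` both sides vanish, the right-hand side because `0 ^ (-k - 1) = 0`. -/
theorem coeff_coe_inv_X_sub_C (c : K) (k : ℕ) :
    (((X - C c)⁻¹ : RatFunc K) : K⸨X⸩).coeff k = -c ^ (-(k : ℤ) - 1) := by
  rcases eq_or_ne c 0 with rfl | hc
  · rw [map_zero, sub_zero, map_inv₀, coe_X, HahnSeries.inv_single,
      HahnSeries.coeff_single_of_ne (by omega), zero_zpow _ (by omega), neg_zero]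
  · have h : ((X - C c : RatFunc K) : K⸨X⸩) *
        HahnSeries.ofPowerSeries ℤ K (-PowerSeries.invUnitsSub (Units.mk0 c hc)) = 1 := by
      rw [coe_X_sub_C, ← map_mul, ← map_one (HahnSeries.ofPowerSeries ℤ K),
        ← PowerSeries.invUnitsSub_mul_sub (Units.mk0 c hc)]
      congr 1
      simp only [Units.val_mk0]
      ring
    rw [map_inv₀, inv_eq_of_mul_eq_one_right h, HahnSeries.ofPowerSeries_apply_coeff]
    simp [PowerSeries.coeff_invUnitsSub, ← zpow_natCast, ← zpow_neg]
    ring_nf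

theorem valuation_zpow_mul_prod_le {ι : Type*} [Fintype ι] [DecidableEq ι] (β : K)
    (x u : ι → K) {a₀ : ι} (hx : ∀ a ≠ a₀, x a ≠ 0) (z : ℤ) :
    Valued.v ((1 + C β * X) ^ z * ∏ a, X * C (u a) * (X - C (x a))⁻¹ : RatFunc K)
      ≤ exp (-1) ^ (Fintype.card ι - 1) := by
  rw [map_mul, map_zpow₀, valuation_one_add_C_mul_X, one_zpow, one_mul, map_prod,
    ← Finset.mul_prod_erase _ _ (Finset.mem_univ a₀), Fintype.card,
    ← Finset.card_erase_of_mem (Finset.mem_univ a₀)]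
  refine mul_le_of_le_one_of_le (valuation_X_mul_C_mul_inv_X_sub_C_le_one _ _)
    (Finset.prod_le_pow_card _ _ _ fun a ha => ?_)
  exact valuation_X_mul_C_mul_inv_X_sub_C_le _ (hx a (Finset.ne_of_mem_erase ha))

theorem coeff_coe_zpow_mul_prod_sub_sum {ι : Type*} [Fintype ι] (β : K) {x : ι → K}
    (hx : Function.Injective x) (u c : ι → K) (z : ℤ) {k : ℕ} (hk : k + 2 ≤ Fintype.card ι) :
    (((1 + C β * X) ^ z * ∏ a, X * C (u a) * (X - C (x a))⁻¹
        - ∑ a, C (c a) * (X - C (x a))⁻¹ : RatFunc K) : K⸨X⸩).coeff k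
      = ∑ a, c a * x a ^ (-(k : ℤ) - 1) := by
  classical
  obtain ⟨a₀, ha₀⟩ : ∃ a₀, ∀ a ≠ a₀, x a ≠ 0 := by
    by_cases h : ∃ a₀, x a₀ = 0
    · obtain ⟨a₀, h₀⟩ := h
      exact ⟨a₀, fun a ha h' => ha (hx (h'.trans h₀.symm))⟩
    · have : Nonempty ι := Fintype.card_pos_iff.1 (by omega)
      exact ⟨Classical.arbitrary ι, fun a _ h' => h ⟨a, h'⟩⟩
  have hzero : (((1 + C β * X) ^ z * ∏ a, X * C (u a) * (X - C (x a))⁻¹ : RatFunc K) :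
      K⸨X⸩).coeff k = 0 := by
    refine LaurentSeries.coeff_zero_of_lt_valuation K (D := Fintype.card ι - 1) ?_ (by omega)
    rw [LaurentSeries.valuation_coe_ratFunc]
    convert valuation_zpow_mul_prod_le β x u ha₀ z using 1
    rw [← exp_nsmul, nsmul_eq_mul, mul_neg_one, Nat.cast_sub (by omega), Nat.cast_one]
  rw [map_sub, HahnSeries.coeff_sub, hzero, map_sum, HahnSeries.coeff_sum, zero_sub,
    ← Finset.sum_neg_distrib]
  refine Finset.sum_congr rfl fun a _ => ?_
  rw [coeff_coe_C_mul, coeff_coe_inv_X_sub_C, mul_neg, neg_neg]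

end RatFunc

theorem Matrix.det_of_sum_mul_pow {R ι : Type*} [CommRing R] [Fintype ι] {r : ℕ}
    (d : Fin r → ι → R) (v : ι → R) :
    (Matrix.of fun i j : Fin r => ∑ a, d i a * v a ^ (j : ℕ)).det
      = ∑ p : Fin r ↪ ι, (∏ i, d i (p i)) * ∏ i, ∏ j ∈ Finset.Ioi i, (v (p j) - v (p i)) := by
  classical
  have hrows : (Matrix.of fun i j : Fin r => ∑ a, d i a * v a ^ (j : ℕ))
      = fun i => ∑ a, d i a • fun j : Fin r => v a ^ (j : ℕ) := by
    ext i j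
    simp [Finset.sum_apply]
  have hexpand : (Matrix.of fun i j : Fin r => ∑ a, d i a * v a ^ (j : ℕ)).det
      = ∑ p : Fin r → ι, (∏ i, d i (p i)) * (vandermonde (v ∘ p)).det := by
    rw [Matrix.det, hrows]
    refine (detRowAlternating.toMultilinearMap.map_sum _).trans
      (Finset.sum_congr rfl fun p _ => ?_)
    rw [MultilinearMap.map_smul_univ, smul_eq_mul]
    rfl
  rw [hexpand, ← Finset.sum_filter_of_ne (p := Function.Injective) fun p _ hp => ?_,
    Finset.sum_subtype (p := Function.Injective) _ fun _ => Finset.mem_filter_univ _]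
  · exact Fintype.sum_equiv (Equiv.subtypeInjectiveEquivEmbedding _ _) _ _
      fun p => by rw [det_vandermonde]; rfl
  · by_contra hinj
    obtain ⟨i, j, hij, hne⟩ : ∃ i j, p i = p j ∧ i ≠ j := by
      simpa [Function.Injective] using hinj
    exact hp (mul_eq_zero_of_right _ (det_zero_of_row_eq hne (by ext; simp [hij])))

open Finset

theorem Fin.prod_prod_Iio_eq_prod_prod_Ioi {M : Type*} [CommMonoid M] {r : ℕ}
    (f : Fin r → Fin r → M) : ∏ j, ∏ i ∈ Iio j, f i j = ∏ i, ∏ j ∈ Ioi i, f i j :=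
  prod_comm' (by simp)

section

variable {ι : Type*} [Fintype ι] {r : ℕ}

theorem prod_erase_eq_prod_filter_mul_prod_Iio [DecidableEq ι] {M : Type*} [CommMonoid M]
    (f : ι → M) (p : Fin r ↪ ι) (i : Fin r) :
    ∏ c ∈ univ.erase (p i), f c
      = (∏ c ∈ univ.filter (fun c => ∀ i' : Fin r, i' ≤ i → p i' ≠ c), f c)
        * ∏ i' ∈ Iio i, f (p i') := by
  have hsub : (Iio i).map p ⊆ univ.erase (p i) := by
    simpa [subset_iff] using fun i' (h : i' < i) => h.ne
  have hdiff : univ.erase (p i) \ (Iio i).map p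
      = univ.filter (fun c => ∀ i' : Fin r, i' ≤ i → p i' ≠ c) := by
    ext c
    simp only [mem_sdiff, mem_erase, mem_map, mem_Iio, mem_filter, mem_univ, and_true, true_and,
      not_exists, not_and]
    constructor
    · rintro ⟨hc, hlt⟩ i' hi' rfl
      exact (lt_or_eq_of_le hi').elim (fun h => hlt i' h rfl) fun h => hc (h ▸ rfl)
    · exact fun h => ⟨fun hc => h i le_rfl hc.symm, fun i' hi' => h i' hi'.le⟩
  rw [← prod_sdiff hsub, hdiff, prod_map]

variable {K : Type*} [Field K]

theorem inv_pow_sub_one_sub_eq_zpow_neg (a : K) (i : Fin r) :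
    (a⁻¹) ^ (r - 1 - i : ℕ) = a ^ (-((r : ℤ) - 1 - i)) := by
  rw [inv_pow, ← zpow_natCast, ← zpow_neg]
  congr
  omega

theorem pow_mul_prod_filter_div_div_eq [DecidableEq ι] {x w : ι → K}
    (hx : Function.Injective x) (hw : ∀ a, w a ≠ 0) (R : ι → K)
    (hR : ∀ b, R b = x b * ∏ c ∈ univ.erase b, x b / ((x b - x c) / w c))
    (p : Fin r ↪ ι) (i : Fin r) {l : ℕ} (hl : 1 ≤ l) :
    x (p i) ^ l * ∏ c ∈ univ.filter (fun c => ∀ i' : Fin r, i' ≤ i → p i' ≠ c),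
        x (p i) / ((x (p i) - x c) / w c)
      = R (p i) * x (p i) ^ ((l : ℤ) - i - 1)
        * ∏ i' ∈ Iio i, (x (p i) - x (p i')) / w (p i') := by
  set b := p i
  rcases eq_or_ne (x b) 0 with h0 | h0
  · simp [hR, h0, zero_pow (by omega : l ≠ 0)]
  have hden : ∀ i' ∈ Iio i, (x b - x (p i')) / w (p i') ≠ 0 := fun i' hi' =>
    div_ne_zero (sub_ne_zero.2 (hx.ne (p.injective.ne (mem_Iio.1 hi').ne'))) (hw _)
  have hprev : (∏ i' ∈ Iio i, x b / ((x b - x (p i')) / w (p i')))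
      * ∏ i' ∈ Iio i, (x b - x (p i')) / w (p i') = x b ^ (i : ℕ) := by
    rw [← prod_mul_distrib, prod_congr rfl fun i' hi' => div_mul_cancel₀ _ (hden i' hi'),
      prod_const, Fin.card_Iio]
  have hpow : x b * x b ^ (i : ℕ) * x b ^ ((l : ℤ) - i - 1) = x b ^ l := by
    rw [← zpow_natCast, ← zpow_one_add₀ h0, ← zpow_add₀ h0, ← zpow_natCast]
    ring_nf
  rw [hR, prod_erase_eq_prod_filter_mul_prod_Iio _ p i, ← hpow]
  linear_combination -(∏ c ∈ univ.filter (fun c => ∀ i' : Fin r, i' ≤ i → p i' ≠ c),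
      x b / ((x b - x c) / w c)) * x b * x b ^ ((l : ℤ) - i - 1) * hprev

theorem prod_pow_mul_prod_filter_div_div_eq [DecidableEq ι] {x w : ι → K}
    (hx : Function.Injective x) (hw : ∀ a, w a ≠ 0) (R : ι → K)
    (hR : ∀ b, R b = x b * ∏ c ∈ univ.erase b, x b / ((x b - x c) / w c))
    {lam : Fin r → ℕ} (hlam : ∀ i, 1 ≤ lam i) (p : Fin r ↪ ι) :
    (∏ i, x (p i) ^ lam i) * ∏ i, ∏ c ∈ univ.filter (fun c => ∀ i' : Fin r, i' ≤ i → p i' ≠ c),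
        x (p i) / ((x (p i) - x c) / w c)
      = (∏ i, w (p i) ^ (-((r : ℤ) - 1 - i)) * R (p i) * x (p i) ^ ((lam i : ℤ) - i - 1))
        * ∏ i, ∏ j ∈ Ioi i, (x (p j) - x (p i)) := by
  calc (∏ i, x (p i) ^ lam i) * ∏ i, ∏ c ∈ univ.filter (fun c => ∀ i' : Fin r, i' ≤ i → p i' ≠ c),
        x (p i) / ((x (p i) - x c) / w c)
      = (∏ i, R (p i) * x (p i) ^ ((lam i : ℤ) - i - 1))
        * ∏ i, ∏ j ∈ Ioi i, (x (p j) - x (p i)) / w (p i) := by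
        rw [← prod_mul_distrib, prod_congr rfl fun i _ =>
            pow_mul_prod_filter_div_div_eq hx hw R hR p i (hlam i),
          prod_mul_distrib, ← Fin.prod_prod_Iio_eq_prod_prod_Ioi]
    _ = _ := by
        rw [← prod_mul_distrib, ← prod_mul_distrib]
        refine prod_congr rfl fun i _ => ?_
        rw [prod_div_distrib, prod_const, Fin.card_Ioi, div_eq_mul_inv, ← inv_pow,
          inv_pow_sub_one_sub_eq_zpow_neg]
        ring

theorem det_of_sum_zpow_mul_pow {x : ι → K} (w R : ι → K) (hR : ∀ a, x a = 0 → R a = 0)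
    (μ : Fin r → ℤ) :
    (Matrix.of fun i j : Fin r =>
        ∑ a, w a ^ (-((r : ℤ) - 1 - i)) * R a * x a ^ (μ i + j - i - 1)).det
      = ∑ p : Fin r ↪ ι,
          (∏ i, w (p i) ^ (-((r : ℤ) - 1 - i)) * R (p i) * x (p i) ^ (μ i - i - 1))
            * ∏ i, ∏ j ∈ Ioi i, (x (p j) - x (p i)) := by
  have hentry : (Matrix.of fun i j : Fin r =>
        ∑ a, w a ^ (-((r : ℤ) - 1 - i)) * R a * x a ^ (μ i + j - i - 1))
      = Matrix.of fun i j : Fin r =>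
        ∑ a, w a ^ (-((r : ℤ) - 1 - i)) * R a * x a ^ (μ i - i - 1) * x a ^ (j : ℕ) := by
    ext i j
    refine sum_congr rfl fun a _ => ?_
    rcases eq_or_ne (x a) 0 with h0 | h0
    · simp [hR a h0]
    · rw [show μ i + j - i - 1 = (μ i - i - 1) + (j : ℕ) by ring, zpow_add₀ h0, zpow_natCast]
      ring
  rw [hentry, Matrix.det_of_sum_mul_pow]

theorem det_of_sum_zpow_sub_mul_pow {x : ι → K} {β : K} (hw : ∀ a, 1 + β * x a ≠ 0)
    (R : ι → K) (hR : ∀ a, x a = 0 → R a = 0) (μ : Fin r → ℤ) :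
    (Matrix.of fun i j : Fin r =>
        ∑ a, (1 + β * x a) ^ (-((j : ℤ) - i)) * R a * x a ^ (μ i + j - i - 1)).det
      = ∑ p : Fin r ↪ ι, (∏ i, (1 + β * x (p i)) ^ (-((r : ℤ) - 1 - i)) * R (p i)
          * x (p i) ^ (μ i - i - 1)) * ∏ i, ∏ j ∈ Ioi i, (x (p j) - x (p i)) := by
  set w : ι → K := fun a => 1 + β * x a
  have hentry : (Matrix.of fun i j : Fin r =>
        ∑ a, w a ^ (-((j : ℤ) - i)) * R a * x a ^ (μ i + j - i - 1))
      = Matrix.of fun i j : Fin r =>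
        ∑ a, w a ^ (i : ℤ) * R a * x a ^ (μ i - i - 1) * (x a / w a) ^ (j : ℕ) := by
    ext i j
    refine sum_congr rfl fun a _ => ?_
    rcases eq_or_ne (x a) 0 with h0 | h0
    · simp [hR a h0]
    · rw [show μ i + j - i - 1 = (μ i - i - 1) + (j : ℕ) by ring, zpow_add₀ h0,
        show -((j : ℤ) - i) = i + -(j : ℕ) by ring, zpow_add₀ (hw a), zpow_neg]
      simp only [zpow_natCast, div_pow]
      ring
  have hdiff : ∀ b c, x c / w c - x b / w b = (x c - x b) * ((w c)⁻¹ * (w b)⁻¹) := by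
    intro b c
    rw [div_sub_div _ _ (hw c) (hw b), div_eq_mul_inv, mul_inv]
    congr 1
    ring
  rw [hentry, Matrix.det_of_sum_mul_pow]
  refine sum_congr rfl fun p _ => ?_
  simp only [hdiff, prod_mul_distrib, prod_const, Fin.card_Ioi]
  rw [← Fin.prod_prod_Iio_eq_prod_prod_Ioi (fun _ j => (w (p j))⁻¹)]
  simp only [prod_const, Fin.card_Iio, inv_pow_sub_one_sub_eq_zpow_neg]
  have hcancel : (∏ i, w (p i) ^ (i : ℤ)) * ∏ i, (w (p i))⁻¹ ^ (i : ℕ) = 1 := by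
    rw [← prod_mul_distrib]
    exact prod_eq_one fun i _ => by
      rw [inv_pow, zpow_natCast, mul_inv_cancel₀ (pow_ne_zero _ (hw _))]
  linear_combination ((∏ i, w (p i) ^ (-((r : ℤ) - 1 - i))) * (∏ i, R (p i))
    * (∏ i, x (p i) ^ (μ i - i - 1)) * ∏ i, ∏ j ∈ Ioi i, (x (p j) - x (p i))) * hcancel
end

/-- Indices are 0-based: `i, j : Fin r` stand for the paper's `i + 1, j + 1`, so the paper's
`r - i` becomes `r - 1 - i`. -/
theorem stmt13_general {K : Type*} [Field K] (β : K) (n : ℕ)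
    (x : Fin n → K)
    (hx : Function.Injective x)
    (hxu : ∀ i, 1 + β * x i ≠ 0)
    (ominus : K → K → K)
    (hominus : ∀ a b, ominus a b = (a - b) / (1 + β * b))
    -- `R_a = x_a ∏_{b ≠ a} x_a/(x_a ⊖ x_b)` :
    (Ra : Fin n → K)
    (hRa : ∀ a, Ra a = x a * ∏ b ∈ Finset.univ.erase a, x a / ominus (x a) (x b))
    -- the rational function `N_s(z)` :
    (N : ℤ → RatFunc K)
    (hN : ∀ s : ℤ, N s =
      (1 + RatFunc.C β * RatFunc.X) ^ (-(s + 1))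
          * ∏ a, RatFunc.X * RatFunc.C (1 + β * x a) * (RatFunc.X - RatFunc.C (x a))⁻¹
        - ∑ a, RatFunc.C ((1 + β * x a) ^ (-s) * Ra a)
            * (RatFunc.X - RatFunc.C (x a))⁻¹)
    -- the coefficients `e(m, s)` :
    (e : ℤ → ℤ → K)
    (he_pos : ∀ m s : ℤ, 1 ≤ m →
      e m s = ∑ a, (1 + β * x a) ^ (-s) * Ra a * x a ^ (m - 1))
    (he_nonpos : ∀ m s : ℤ, m ≤ 0 →
      e m s = ((N s : LaurentSeries K)).coeff (-m))
    -- the partition `λ₁ ≥ λ₂ ≥ … ≥ λ_r ≥ 1`, `r ≤ n` :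
    (r : ℕ) (hrn : r ≤ n)
    (lam : Fin r → ℕ)
    (hlam1 : ∀ i, 1 ≤ lam i)
    -- the generalized Hall–Littlewood function `Q_λ` :
    (Q : K)
    (hQ : Q = ∑ a : Fin r ↪ Fin n,
      (∏ i, x (a i) ^ lam i)
        * ∏ i : Fin r,
            ∏ j ∈ Finset.univ.filter (fun j : Fin n => ∀ i' : Fin r, i' ≤ i → a i' ≠ j),
              x (a i) / ominus (x (a i)) (x j)) :
    Q = Matrix.det (Matrix.of fun i j : Fin r =>
          e ((lam i : ℤ) + (j : ℤ) - (i : ℤ)) ((r : ℤ) - 1 - (i : ℤ)))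
      ∧ Q = Matrix.det (Matrix.of fun i j : Fin r =>
          e ((lam i : ℤ) + (j : ℤ) - (i : ℤ)) ((j : ℤ) - (i : ℤ))) := by
  simp only [hominus] at hRa hQ
  have hR0 : ∀ a, x a = 0 → Ra a = 0 := fun a h => by rw [hRa, h, zero_mul]
  have he : ∀ m s : ℤ, 2 - (n : ℤ) ≤ m →
      e m s = ∑ a, (1 + β * x a) ^ (-s) * Ra a * x a ^ (m - 1) := by
    intro m s hm
    rcases le_or_gt 1 m with h1 | h1
    · exact he_pos m s h1
    obtain ⟨k, rfl⟩ : ∃ k : ℕ, m = -k := ⟨m.natAbs, by omega⟩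
    rw [he_nonpos _ s (by omega), hN, neg_neg,
      RatFunc.coeff_coe_zpow_mul_prod_sub_sum β hx _ _ _ (by simp; omega)]
  have hbound : ∀ i j : Fin r, 2 - (n : ℤ) ≤ lam i + j - i := fun i j => by
    have := hlam1 i
    omega
  have hQ' := hQ.trans (sum_congr rfl fun p _ =>
    prod_pow_mul_prod_filter_div_div_eq (w := fun a => 1 + β * x a) hx hxu Ra hRa hlam1 p)
  constructor
  · refine hQ'.trans ((det_of_sum_zpow_mul_pow (x := x) (fun a => 1 + β * x a) Ra hR0
      fun i => (lam i : ℤ)).symm.trans ?_)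
    congr 2
    ext i j
    exact (he _ _ (hbound i j)).symm
  · refine hQ'.trans ((det_of_sum_zpow_sub_mul_pow hxu Ra hR0
      fun i => (lam i : ℤ)).symm.trans ?_)
    congr 2
    ext i j
    exact (he _ _ (hbound i j)).symm

/-- Corollary 11, determinant formulas, `t = 0`: for a partition
`λ = (λ₁ ≥ … ≥ λ_r ≥ 1)` with `r ≤ n`,
`Q_λ = det(e(λᵢ + j - i, r - i))_{1≤i,j≤r} = det(e(λᵢ + j - i, j - i))_{1≤i,j≤r}`,
where `Q_λ = Σ_a ∏ᵢ x_{a(i)}^{λᵢ} ∏ᵢ ∏_{j∉{a(1),…,a(i)}} x_{a(i)}/(x_{a(i)} ⊖ x_j)`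
(sum over injections `a`), `e(m,s) = Σ_a (1+βx_a)^{-s} R_a x_a^{m-1}` for `m ≥ 1`,
and for `m ≤ 0`, `e(m,s)` is the coefficient of `z^{-m}` in the Taylor expansion
at `z = 0` of `N_s(z) = (1+βz)^{-s-1} ∏_a z(1+βx_a)/(z-x_a)
 - Σ_a (1+βx_a)^{-s} R_a/(z-x_a)`.  (Indices here are 0-based: `i, j ∈ Fin r`
correspond to the paper's `i+1, j+1`, so `r - i` becomes `r - 1 - i` and
`j - i`, `λᵢ + j - i` are unchanged.) -/
theorem stmt13 {K : Type*} [Field K] (β : K) (n : ℕ) (hn : 1 ≤ n)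
    (x : Fin n → K)
    (hx : Function.Injective x)
    (hxu : ∀ i, 1 + β * x i ≠ 0)
    (ominus : K → K → K)
    (hominus : ∀ a b, ominus a b = (a - b) / (1 + β * b))
    -- `R_a = x_a ∏_{b ≠ a} x_a/(x_a ⊖ x_b)` :
    (Ra : Fin n → K)
    (hRa : ∀ a, Ra a = x a * ∏ b ∈ Finset.univ.erase a, x a / ominus (x a) (x b))
    -- the rational function `N_s(z)` :
    (N : ℤ → RatFunc K)
    (hN : ∀ s : ℤ, N s =
      (1 + RatFunc.C β * RatFunc.X) ^ (-(s + 1))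
          * ∏ a, RatFunc.X * RatFunc.C (1 + β * x a) * (RatFunc.X - RatFunc.C (x a))⁻¹
        - ∑ a, RatFunc.C ((1 + β * x a) ^ (-s) * Ra a)
            * (RatFunc.X - RatFunc.C (x a))⁻¹)
    -- the coefficients `e(m, s)` :
    (e : ℤ → ℤ → K)
    (he_pos : ∀ m s : ℤ, 1 ≤ m →
      e m s = ∑ a, (1 + β * x a) ^ (-s) * Ra a * x a ^ (m - 1))
    (he_nonpos : ∀ m s : ℤ, m ≤ 0 →
      e m s = ((N s : LaurentSeries K)).coeff (-m))
    -- the partition `λ₁ ≥ λ₂ ≥ … ≥ λ_r ≥ 1`, `r ≤ n` :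
    (r : ℕ) (hr : 1 ≤ r) (hrn : r ≤ n)
    (lam : Fin r → ℕ)
    (hanti : ∀ i j : Fin r, i ≤ j → lam j ≤ lam i)
    (hlam1 : ∀ i, 1 ≤ lam i)
    -- the generalized Hall–Littlewood function `Q_λ` :
    (Q : K)
    (hQ : Q = ∑ a : Fin r ↪ Fin n,
      (∏ i, x (a i) ^ lam i)
        * ∏ i : Fin r,
            ∏ j ∈ Finset.univ.filter (fun j : Fin n => ∀ i' : Fin r, i' ≤ i → a i' ≠ j),
              x (a i) / ominus (x (a i)) (x j)) :
    Q = Matrix.det (Matrix.of fun i j : Fin r =>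
          e ((lam i : ℤ) + (j : ℤ) - (i : ℤ)) ((r : ℤ) - 1 - (i : ℤ)))
      ∧ Q = Matrix.det (Matrix.of fun i j : Fin r =>
          e ((lam i : ℤ) + (j : ℤ) - (i : ℤ)) ((j : ℤ) - (i : ℤ))) :=
  stmt13_general β n x hx hxu ominus hominus Ra hRa N hN e he_pos he_nonpos r hrn lam hlam1 Q hQ
end

section
/- Suppose z ≠ x_1, 1 + β·x_1 ≠ 0, 1 + β·z + γ·z² ≠ 0, 1 − γ·z·w_1 ≠ 0, 1 − γ·w_1·x_1 ≠ 0, 1 − γ·x_1·w_1 ≠ 0, and 1 + β·x_1 + γ·z·x_1 ≠ 0. Then [1/(1+βz+γz²)] · E(z,w_1)/E(z, ι(x_1)) = 1/(1+βz+γz²) + γ·w_1·(x_1 + w_1 + β·x_1·w_1)/((1 − γ·w_1·x_1)·(1 − γ·w_1·z)) + E(x_1,w_1)/(z − x_1). (Here E(z, ι(x_1)) = (z − x_1)/(1 + β·x_1 + γ·z·x_1) and P(z) := 1+βz+γz² is the series P_F for the elliptic formal group law; w_1 plays the role of [t]ι(x_1).) -/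
/-!
Writing `S(a) = a + w₁ + β a w₁` for the numerator of `E(a, w₁)` and `D = 1 + β x₁ + γ z x₁`,
everything rests on the polynomial identity `D · S(z) = (1 - γ z w₁)(z - x₁) + P(z) · S(x₁)`,
which splits `E(z, w₁) / E(z, ι x₁) = D S(z) / ((1 - γ z w₁)(z - x₁))` into
`1 + P(z) S(x₁) / ((1 - γ z w₁)(z - x₁))`; the last fraction is the sum of the two partial
fractions on the right-hand side.
-/

section EllipticFormalGroupLaw

variable {K : Type*} [Field K] (β γ : K)

def ellipticFGL (a b : K) : K := (a + b + β * a * b) / (1 - γ * a * b)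

def ellipticInv (x : K) : K := -x / (1 + β * x)

variable {β γ}

theorem ellipticFGL_ellipticInv {x : K} (hx : 1 + β * x ≠ 0) (z : K) :
    ellipticFGL β γ z (ellipticInv β x) = (z - x) / (1 + β * x + γ * z * x) := by
  have hinv : ellipticInv β x * (1 + β * x) = -x := div_mul_cancel₀ _ hx
  have hnum : z + ellipticInv β x + β * z * ellipticInv β x = (z - x) / (1 + β * x) := by
    rw [eq_div_iff hx]
    linear_combination (1 + β * z) * hinv
  have hden : 1 - γ * z * ellipticInv β x = (1 + β * x + γ * z * x) / (1 + β * x) := by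
    rw [eq_div_iff hx]
    linear_combination (-(γ * z)) * hinv
  rw [ellipticFGL, hnum, hden, div_div_div_cancel_right₀ hx]

theorem ellipticFGL_num_identity (x w z : K) :
    (1 + β * x + γ * z * x) * (z + w + β * z * w)
      = (1 - γ * z * w) * (z - x) + (1 + β * z + γ * z ^ 2) * (x + w + β * x * w) := by
  ring

theorem ellipticFGL_partial_fraction {x w z : K} (hzx : z - x ≠ 0)
    (hwx : 1 - γ * w * x ≠ 0) (hwz : 1 - γ * w * z ≠ 0) :
    γ * w / ((1 - γ * w * x) * (1 - γ * w * z)) + 1 / ((1 - γ * w * x) * (z - x))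
      = 1 / ((1 - γ * w * z) * (z - x)) := by
  rw [div_add_div _ _ (mul_ne_zero hwx hwz) (mul_ne_zero hwx hzx),
    div_eq_div_iff (mul_ne_zero (mul_ne_zero hwx hwz) (mul_ne_zero hwx hzx)) (mul_ne_zero hwz hzx)]
  ring

theorem div_ellipticFGL_ellipticInv_eq {x w z : K} (hzx : z ≠ x)
    (hP : 1 + β * z + γ * z ^ 2 ≠ 0) (hzw : 1 - γ * z * w ≠ 0) (hwx : 1 - γ * w * x ≠ 0) :
    1 / (1 + β * z + γ * z ^ 2) * (ellipticFGL β γ z w / ((z - x) / (1 + β * x + γ * z * x)))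
      = 1 / (1 + β * z + γ * z ^ 2)
        + γ * w * (x + w + β * x * w) / ((1 - γ * w * x) * (1 - γ * w * z))
        + ellipticFGL β γ x w / (z - x) := by
  have hzx' : z - x ≠ 0 := sub_ne_zero.mpr hzx
  have hwz : 1 - γ * w * z ≠ 0 := by rwa [mul_right_comm]
  set P := 1 + β * z + γ * z ^ 2
  set S := x + w + β * x * w
  calc 1 / P * (ellipticFGL β γ z w / ((z - x) / (1 + β * x + γ * z * x)))
      = (1 + β * x + γ * z * x) * (z + w + β * z * w) / (P * ((1 - γ * z * w) * (z - x))) := by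
        rw [ellipticFGL, div_div_div_eq, one_div_mul_eq_div, div_div]
        ring
    _ = ((1 - γ * z * w) * (z - x) + P * S) / (P * ((1 - γ * z * w) * (z - x))) := by
        rw [ellipticFGL_num_identity]
    _ = 1 / P + S / ((1 - γ * z * w) * (z - x)) := by
        rw [add_div, div_mul_cancel_right₀ (mul_ne_zero hzw hzx'), mul_div_mul_left _ _ hP, one_div]
    _ = 1 / P + γ * w * S / ((1 - γ * w * x) * (1 - γ * w * z)) + ellipticFGL β γ x w / (z - x) := by
        rw [mul_right_comm γ z w, ← mul_one_div S, ← ellipticFGL_partial_fraction hzx' hwx hwz,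
          ellipticFGL, mul_right_comm γ x w, mul_add, ← add_assoc, mul_one_div, mul_div_assoc',
          mul_comm S, div_div]

end EllipticFormalGroupLaw

theorem stmt14_general {K : Type*} [Field K] (β γ x₁ w₁ z : K)
    (E : K → K → K)
    (hE : ∀ a b, E a b = (a + b + β * a * b) / (1 - γ * a * b))
    (ι : K → K)
    (hι : ι x₁ = -x₁ / (1 + β * x₁))
    (hzx : z ≠ x₁)
    (hx1 : 1 + β * x₁ ≠ 0)
    (hP : 1 + β * z + γ * z ^ 2 ≠ 0)
    (h1 : 1 - γ * z * w₁ ≠ 0)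
    (h2 : 1 - γ * w₁ * x₁ ≠ 0) :
    (1 / (1 + β * z + γ * z ^ 2)) * (E z w₁ / E z (ι x₁))
      = 1 / (1 + β * z + γ * z ^ 2)
        + γ * w₁ * (x₁ + w₁ + β * x₁ * w₁) / ((1 - γ * w₁ * x₁) * (1 - γ * w₁ * z))
        + E x₁ w₁ / (z - x₁) := by
  obtain rfl : E = ellipticFGL β γ := funext₂ hE
  rw [hι, ← ellipticInv, ellipticFGL_ellipticInv hx1]
  exact div_ellipticFGL_ellipticInv_eq hzx hP h1 h2

/-- Remark 6, elliptic case: with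
`E(a,b) = (a + b + βab)/(1 - γab)` and `ι(x₁) = -x₁/(1+βx₁)`:
`(1/(1+βz+γz²)) · E(z,w₁)/E(z,ι(x₁))
  = 1/(1+βz+γz²) + γw₁(x₁+w₁+βx₁w₁)/((1-γw₁x₁)(1-γw₁z)) + E(x₁,w₁)/(z-x₁)`. -/
theorem stmt14 {K : Type*} [Field K] (β γ x₁ w₁ z : K)
    (E : K → K → K)
    (hE : ∀ a b, E a b = (a + b + β * a * b) / (1 - γ * a * b))
    (ι : K → K)
    (hι : ι x₁ = -x₁ / (1 + β * x₁))
    (hzx : z ≠ x₁)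
    (hx1 : 1 + β * x₁ ≠ 0)
    (hP : 1 + β * z + γ * z ^ 2 ≠ 0)
    (h1 : 1 - γ * z * w₁ ≠ 0)
    (h2 : 1 - γ * w₁ * x₁ ≠ 0)
    (h3 : 1 - γ * x₁ * w₁ ≠ 0)
    (h4 : 1 + β * x₁ + γ * z * x₁ ≠ 0) :
    (1 / (1 + β * z + γ * z ^ 2)) * (E z w₁ / E z (ι x₁))
      = 1 / (1 + β * z + γ * z ^ 2)
        + γ * w₁ * (x₁ + w₁ + β * x₁ * w₁) / ((1 - γ * w₁ * x₁) * (1 - γ * w₁ * z))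
        + E x₁ w₁ / (z - x₁) :=
  stmt14_general β γ x₁ w₁ z E hE ι hι hzx hx1 hP h1 h2
end

section
/- For all integers i ≥ ℓ ≥ 1, the following identity holds in ℚ: Σ_{s=0}^{i−ℓ} (−1)^s · (1 − 2^{−(s+1)}) · (2·C(i,ℓ+s) + C(i,ℓ+s+1)) = C(i−1,ℓ−1), where C denotes the binomial coefficient (with C(a,b) = 0 for b > a). -/
private lemma stmt18_aux (j k : ℕ) : ∀ m : ℕ,
    ∑ s ∈ Finset.range (m + 1),
        (-1 : ℚ) ^ s * (1 - (2 : ℚ) ^ (-(s + 1 : ℤ)))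
          * (2 * (Nat.choose (j+1) (k + 1 + s) : ℚ) + (Nat.choose (j+1) (k + 1 + s + 1) : ℚ))
      = (Nat.choose j k : ℚ) + (-1:ℚ)^m *
          ((Nat.choose j (k+1+m) : ℚ)
            + (1 - (2:ℚ) ^ (-(m + 1 : ℤ))) * (Nat.choose (j+1) (k+2+m) : ℚ)) := by
  intro m
  induction m with
  | zero =>
      simp only [zero_add, Finset.sum_range_one, add_zero]
      have hp : ((j+1).choose (k+1) : ℚ) = (j.choose k : ℚ) + (j.choose (k+1) : ℚ) := by
        rw [Nat.choose_succ_succ]; push_cast; ring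
      have h2 : (k + 1 + 1) = k + 2 := by ring
      rw [hp, h2]
      norm_num
      ring
  | succ m ih =>
      rw [Finset.sum_range_succ, ih]
      have hp : ((j+1).choose (k+2+m) : ℚ) = (j.choose (k+1+m) : ℚ) + (j.choose (k+2+m) : ℚ) := by
        have : k + 2 + m = (k + 1 + m) + 1 := by ring
        rw [this, Nat.choose_succ_succ]; push_cast; ring
      have e2 : (k + 1 + (m+1) + 1) = k + 2 + (m+1) := by ring
      have e1 : (k + 1 + (m+1)) = k + 2 + m := by ring
      have e4 : (k + 2 + m + 1) = k + 2 + (m+1) := by ring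
      rw [e2, e1, hp]
      push_cast
      rw [show (-((m:ℤ) + 1 + 1)) = -((m:ℤ)+1) - 1 from by ring,
        zpow_sub_one₀ (two_ne_zero) (-((m:ℤ)+1))]
      ring

/-- for `i ≥ ℓ ≥ 1`, in ℚ,
`Σ_{s=0}^{i-ℓ} (-1)^s (1 - 2^{-(s+1)}) (2C(i,ℓ+s) + C(i,ℓ+s+1)) = C(i-1,ℓ-1)`. -/
theorem stmt18 (i l : ℕ) (hl : 1 ≤ l) (hil : l ≤ i) :
    ∑ s ∈ Finset.range (i - l + 1),
        (-1 : ℚ) ^ s * (1 - (2 : ℚ) ^ (-(s + 1 : ℤ)))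
          * (2 * (Nat.choose i (l + s) : ℚ) + (Nat.choose i (l + s + 1) : ℚ))
      = (Nat.choose (i - 1) (l - 1) : ℚ) := by
  obtain ⟨k, rfl⟩ : ∃ k, l = 1 + k := ⟨l - 1, by omega⟩
  obtain ⟨j, rfl⟩ : ∃ j, i = j + 1 := ⟨i - 1, by omega⟩
  have hjk : k ≤ j := by omega
  have h := stmt18_aux j k (j - k)
  have e0 : ∀ s : ℕ, 1 + k + s = k + 1 + s := fun s => by ring
  simp only [show ∀ s : ℕ, 1 + k + s = k + 1 + s from fun s => by ring] at *
  have e1 : j + 1 - (1 + k) = j - k := by omega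
  have e2 : k + 1 + (j - k) = j + 1 := by omega
  have e3 : k + 2 + (j - k) = j + 2 := by omega
  rw [e1, h, e2, e3]
  simp [Nat.choose_succ_self, Nat.choose_eq_zero_of_lt (show j + 1 < j + 2 by omega)]
end
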